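/- arXiv:1203.3921 — 5 statements merged into one kernel-verified Lean document; each statement's English description precedes it below -/
import Mathlib

section
/- Let H ∈ (1/2, 1) and set α_H = H(2H−1). Then for every a, b ∈ ℝ with a < b, α_H ∫_a^b ∫_a^b cos(u) cos(v) |u−v|^{2H−2} du dv = α_H ∫_0^{b−a} cos(v) v^{2H−2} (b−a−v) dv + α_H cos(a+b) ∫_0^{b−a} v^{2H−2} sin(b−a−v) dv. -/
open MeasureTheory

namespace CosFbmAux
open Set Function

/-- congruence helper for interval integrability -/
lemma II_congr {f g : ℝ → ℝ} {a b : ℝ} (hf : IntervalIntegrable f volume a b)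
    (h : ∀ x ∈ Set.uIcc a b, g x = f x) : IntervalIntegrable g volume a b := by
  rw [intervalIntegrable_iff] at hf ⊢
  exact hf.congr_fun (fun x hx => (h x (Set.uIoc_subset_uIcc hx)).symm) measurableSet_uIoc

noncomputable def F1 (γ T aa : ℝ) (s w : ℝ) : ℝ :=
  if 0 < w ∧ w ≤ s ∧ s ≤ T then w ^ γ * (Real.cos (s + aa) * Real.cos (s - w + aa)) else 0

noncomputable def F2 (γ T aa : ℝ) (s w : ℝ) : ℝ :=
  if 0 < w ∧ 0 < s ∧ s + w ≤ T then w ^ γ * (Real.cos (s + aa) * Real.cos (s + w + aa)) else 0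

lemma integrable_dom (γ T : ℝ) (hγ : -1 < γ) (hT : 0 ≤ T) :
    Integrable (fun p : ℝ × ℝ =>
      ((Ioc (0:ℝ) T).indicator (fun _ => (1:ℝ)) p.1) *
      ((Ioc (0:ℝ) T).indicator (fun w => w ^ γ) p.2)) (volume.prod volume) := by
  apply Integrable.mul_prod
  · exact (integrable_indicator_iff measurableSet_Ioc).2
      (integrableOn_const measure_Ioc_lt_top.ne)
  · have h := intervalIntegral.intervalIntegrable_rpow' (a := (0:ℝ)) (b := T) hγ
    rw [intervalIntegrable_iff, uIoc_of_le hT] at h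
    exact (integrable_indicator_iff measurableSet_Ioc).2 h

lemma dom_nonneg (γ T : ℝ) (p : ℝ × ℝ) :
    0 ≤ ((Ioc (0:ℝ) T).indicator (fun _ => (1:ℝ)) p.1) *
      ((Ioc (0:ℝ) T).indicator (fun w => w ^ γ) p.2) := by
  apply mul_nonneg
  · exact Set.indicator_nonneg (fun _ _ => zero_le_one) _
  · exact Set.indicator_nonneg (fun w hw => Real.rpow_nonneg hw.1.le γ) _

lemma meas_F1 (γ T aa : ℝ) : Measurable (uncurry (F1 γ T aa)) := by
  unfold uncurry F1
  apply Measurable.ite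
  · exact MeasurableSet.inter (measurableSet_lt measurable_const measurable_snd)
      (MeasurableSet.inter (measurableSet_le measurable_snd measurable_fst)
        (measurableSet_le measurable_fst measurable_const))
  · fun_prop
  · fun_prop

lemma meas_F2 (γ T aa : ℝ) : Measurable (uncurry (F2 γ T aa)) := by
  unfold uncurry F2
  apply Measurable.ite
  · exact MeasurableSet.inter (measurableSet_lt measurable_const measurable_snd)
      (MeasurableSet.inter (measurableSet_lt measurable_const measurable_fst)
        (measurableSet_le (measurable_fst.add measurable_snd) measurable_const))
  · fun_prop
  · fun_prop

lemma abs_coscos_le_one (x y : ℝ) : |Real.cos x * Real.cos y| ≤ 1 := by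
  rw [abs_mul]
  exact mul_le_one₀ (Real.abs_cos_le_one x) (abs_nonneg _) (Real.abs_cos_le_one y)

lemma int_F1 (γ T aa : ℝ) (hγ : -1 < γ) (hT : 0 ≤ T) :
    Integrable (uncurry (F1 γ T aa)) (volume.prod volume) := by
  refine (integrable_dom γ T hγ hT).mono' (meas_F1 γ T aa).aestronglyMeasurable
    (ae_of_all _ ?_)
  rintro ⟨s, w⟩
  show ‖F1 γ T aa s w‖ ≤ _
  unfold F1
  split_ifs with h
  · obtain ⟨hw, hws, hsT⟩ := h
    rw [indicator_of_mem (show s ∈ Ioc (0:ℝ) T from ⟨lt_of_lt_of_le hw hws, hsT⟩),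
      indicator_of_mem (show w ∈ Ioc (0:ℝ) T from ⟨hw, hws.trans hsT⟩), one_mul,
      Real.norm_eq_abs, abs_mul, abs_of_nonneg (Real.rpow_nonneg hw.le γ)]
    calc w ^ γ * |Real.cos (s + aa) * Real.cos (s - w + aa)| ≤ w ^ γ * 1 :=
          mul_le_mul_of_nonneg_left (abs_coscos_le_one _ _) (Real.rpow_nonneg hw.le γ)
      _ = w ^ γ := mul_one _
  · simpa using dom_nonneg γ T (s, w)

lemma int_F2 (γ T aa : ℝ) (hγ : -1 < γ) (hT : 0 ≤ T) :
    Integrable (uncurry (F2 γ T aa)) (volume.prod volume) := by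
  refine (integrable_dom γ T hγ hT).mono' (meas_F2 γ T aa).aestronglyMeasurable
    (ae_of_all _ ?_)
  rintro ⟨s, w⟩
  show ‖F2 γ T aa s w‖ ≤ _
  unfold F2
  split_ifs with h
  · obtain ⟨hw, hs, hswT⟩ := h
    have hsT : s ≤ T := by linarith
    have hwT : w ≤ T := by linarith
    rw [indicator_of_mem (show s ∈ Ioc (0:ℝ) T from ⟨hs, hsT⟩),
      indicator_of_mem (show w ∈ Ioc (0:ℝ) T from ⟨hw, hwT⟩), one_mul,
      Real.norm_eq_abs, abs_mul, abs_of_nonneg (Real.rpow_nonneg hw.le γ)]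
    calc w ^ γ * |Real.cos (s + aa) * Real.cos (s + w + aa)| ≤ w ^ γ * 1 :=
          mul_le_mul_of_nonneg_left (abs_coscos_le_one _ _) (Real.rpow_nonneg hw.le γ)
      _ = w ^ γ := mul_one _
  · simpa using dom_nonneg γ T (s, w)

/-- slice of F1 in `w` for fixed `s ∈ Ioc 0 T` -/
lemma F1_slice_w (γ T aa : ℝ) {s : ℝ} (hs : s ∈ Ioc (0:ℝ) T) :
    (∫ w, F1 γ T aa s w) =
      ∫ w in (0:ℝ)..s, w ^ γ * (Real.cos (s + aa) * Real.cos (s - w + aa)) := by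
  have he : (fun w => F1 γ T aa s w) = (Ioc (0:ℝ) s).indicator
      (fun w => w ^ γ * (Real.cos (s + aa) * Real.cos (s - w + aa))) := by
    funext w
    have hiff : (0 < w ∧ w ≤ s ∧ s ≤ T) ↔ (0 < w ∧ w ≤ s) :=
      ⟨fun h => ⟨h.1, h.2.1⟩, fun h => ⟨h.1, h.2, hs.2⟩⟩
    simp only [F1, indicator_apply, mem_Ioc, hiff]
  rw [he, integral_indicator measurableSet_Ioc,
    ← intervalIntegral.integral_of_le hs.1.le]

/-- slice of F2 in `w` for fixed `s ∈ Ioc 0 T` -/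
lemma F2_slice_w (γ T aa : ℝ) {s : ℝ} (hs : s ∈ Ioc (0:ℝ) T) :
    (∫ w, F2 γ T aa s w) =
      ∫ w in (0:ℝ)..(T - s), w ^ γ * (Real.cos (s + aa) * Real.cos (s + w + aa)) := by
  have he : (fun w => F2 γ T aa s w) = (Ioc (0:ℝ) (T - s)).indicator
      (fun w => w ^ γ * (Real.cos (s + aa) * Real.cos (s + w + aa))) := by
    funext w
    have hiff : (0 < w ∧ 0 < s ∧ s + w ≤ T) ↔ (0 < w ∧ w ≤ T - s) := by
      constructor
      · rintro ⟨h1, _, h3⟩; exact ⟨h1, by linarith⟩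
      · rintro ⟨h1, h2⟩; exact ⟨h1, hs.1, by linarith⟩
    simp only [F2, indicator_apply, mem_Ioc, hiff]
  rw [he, integral_indicator measurableSet_Ioc,
    ← intervalIntegral.integral_of_le (by linarith [hs.2] : (0:ℝ) ≤ T - s)]

/-- slice of F1 in `s` for fixed `w` -/
lemma F1_slice_s (γ T aa : ℝ) {w : ℝ} (hw : w ∈ Ioc (0:ℝ) T) :
    (∫ s, F1 γ T aa s w) =
      w ^ γ * ∫ u in w..T, Real.cos (u + aa) * Real.cos (u - w + aa) := by
  have he : (fun s => F1 γ T aa s w) = (Icc w T).indicator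
      (fun s => w ^ γ * (Real.cos (s + aa) * Real.cos (s - w + aa))) := by
    funext s
    have hiff : (0 < w ∧ w ≤ s ∧ s ≤ T) ↔ (w ≤ s ∧ s ≤ T) :=
      ⟨fun h => h.2, fun h => ⟨hw.1, h⟩⟩
    simp only [F1, indicator_apply, mem_Icc, hiff]
  rw [he, integral_indicator measurableSet_Icc, integral_Icc_eq_integral_Ioc,
    ← intervalIntegral.integral_of_le hw.2, intervalIntegral.integral_const_mul]

lemma F1_slice_s_zero (γ T aa : ℝ) {w : ℝ} (hw : w ∉ Ioc (0:ℝ) T) :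
    (∫ s, F1 γ T aa s w) = 0 := by
  have : (fun s => F1 γ T aa s w) = fun _ => (0:ℝ) := by
    funext s
    unfold F1
    rw [if_neg]
    rintro ⟨h1, h2, h3⟩
    exact hw ⟨h1, h2.trans h3⟩
  rw [this, integral_zero]

lemma F2_slice_s (γ T aa : ℝ) {w : ℝ} (hw : w ∈ Ioc (0:ℝ) T) :
    (∫ s, F2 γ T aa s w) =
      w ^ γ * ∫ s in (0:ℝ)..(T - w), Real.cos (s + aa) * Real.cos (s + w + aa) := by
  have he : (fun s => F2 γ T aa s w) = (Ioc (0:ℝ) (T - w)).indicator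
      (fun s => w ^ γ * (Real.cos (s + aa) * Real.cos (s + w + aa))) := by
    funext s
    have hiff : (0 < w ∧ 0 < s ∧ s + w ≤ T) ↔ (0 < s ∧ s ≤ T - w) := by
      constructor
      · rintro ⟨_, h2, h3⟩; exact ⟨h2, by linarith⟩
      · rintro ⟨h1, h2⟩; exact ⟨hw.1, h1, by linarith⟩
    simp only [F2, indicator_apply, mem_Ioc, hiff]
  rw [he, integral_indicator measurableSet_Ioc,
    ← intervalIntegral.integral_of_le (by linarith [hw.2] : (0:ℝ) ≤ T - w),
    intervalIntegral.integral_const_mul]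

lemma F2_slice_s_zero (γ T aa : ℝ) {w : ℝ} (hw : w ∉ Ioc (0:ℝ) T) :
    (∫ s, F2 γ T aa s w) = 0 := by
  have : (fun s => F2 γ T aa s w) = fun _ => (0:ℝ) := by
    funext s
    unfold F2
    rw [if_neg]
    rintro ⟨h1, h2, h3⟩
    exact hw ⟨h1, by linarith⟩
  rw [this, integral_zero]


lemma inner_split (γ T aa : ℝ) (hγ : -1 < γ) {s : ℝ} (hs : s ∈ Ioc (0:ℝ) T) :
    (∫ t in (0:ℝ)..T, Real.cos (s + aa) * Real.cos (t + aa) * |s - t| ^ γ) =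
      (∫ w, F1 γ T aa s w) + (∫ w, F2 γ T aa s w) := by
  have hs0 : (0:ℝ) ≤ s := hs.1.le
  have hbase1 : IntervalIntegrable (fun t : ℝ => (s - t) ^ γ) volume 0 s := by
    have h := (intervalIntegral.intervalIntegrable_rpow' (a := (0:ℝ)) (b := s) hγ).comp_sub_left s
    simpa using h.symm
  have hmul1 : IntervalIntegrable
      (fun t => (s - t) ^ γ * (Real.cos (s + aa) * Real.cos (t + aa))) volume 0 s :=
    hbase1.mul_continuousOn (by fun_prop)
  have hii1 : IntervalIntegrable
      (fun t => Real.cos (s + aa) * Real.cos (t + aa) * |s - t| ^ γ) volume 0 s := by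
    apply II_congr hmul1
    intro x hx
    rw [Set.uIcc_of_le hs0] at hx
    rw [abs_of_nonneg (by linarith [hx.2] : (0:ℝ) ≤ s - x)]
    ring
  have hbase2 : IntervalIntegrable (fun t : ℝ => (t - s) ^ γ) volume s T := by
    have h := (intervalIntegral.intervalIntegrable_rpow'
      (a := (0:ℝ)) (b := T - s) hγ).comp_sub_right s
    simpa using h
  have hmul2 : IntervalIntegrable
      (fun t => (t - s) ^ γ * (Real.cos (s + aa) * Real.cos (t + aa))) volume s T :=
    hbase2.mul_continuousOn (by fun_prop)
  have hii2 : IntervalIntegrable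
      (fun t => Real.cos (s + aa) * Real.cos (t + aa) * |s - t| ^ γ) volume s T := by
    apply II_congr hmul2
    intro x hx
    rw [Set.uIcc_of_le hs.2] at hx
    rw [abs_sub_comm, abs_of_nonneg (by linarith [hx.1] : (0:ℝ) ≤ x - s)]
    ring
  rw [← intervalIntegral.integral_add_adjacent_intervals hii1 hii2]
  congr 1
  · -- piece on [0,s]
    have e1 : (∫ t in (0:ℝ)..s, Real.cos (s + aa) * Real.cos (t + aa) * |s - t| ^ γ) =
        ∫ t in (0:ℝ)..s,
          (fun w => w ^ γ * (Real.cos (s + aa) * Real.cos (s - w + aa))) (s - t) := by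
      apply intervalIntegral.integral_congr
      intro x hx
      rw [Set.uIcc_of_le hs0] at hx
      simp only
      rw [abs_of_nonneg (by linarith [hx.2] : (0:ℝ) ≤ s - x),
        show s - (s - x) = x by ring]
      ring
    rw [e1, intervalIntegral.integral_comp_sub_left
      (fun w => w ^ γ * (Real.cos (s + aa) * Real.cos (s - w + aa))) s,
      sub_self, sub_zero, ← F1_slice_w γ T aa hs]
  · -- piece on [s,T]
    have e2 : (∫ t in s..T, Real.cos (s + aa) * Real.cos (t + aa) * |s - t| ^ γ) =
        ∫ t in s..T,
          (fun w => w ^ γ * (Real.cos (s + aa) * Real.cos (s + w + aa))) (t - s) := by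
      apply intervalIntegral.integral_congr
      intro x hx
      rw [Set.uIcc_of_le hs.2] at hx
      simp only
      rw [abs_sub_comm, abs_of_nonneg (by linarith [hx.1] : (0:ℝ) ≤ x - s),
        show s + (x - s) = x by ring]
      ring
    rw [e2, intervalIntegral.integral_comp_sub_right
      (fun w => w ^ γ * (Real.cos (s + aa) * Real.cos (s + w + aa))) s,
      sub_self, ← F2_slice_w γ T aa hs]


lemma key (γ T aa : ℝ) (hγ : -1 < γ) (hT : 0 ≤ T) :
    (∫ s in (0:ℝ)..T, ∫ t in (0:ℝ)..T,
        Real.cos (s + aa) * Real.cos (t + aa) * |s - t| ^ γ) =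
      (∫ w in (0:ℝ)..T, w ^ γ * ∫ u in w..T, Real.cos (u + aa) * Real.cos (u - w + aa))
        + ∫ w in (0:ℝ)..T, w ^ γ *
            ∫ s in (0:ℝ)..(T - w), Real.cos (s + aa) * Real.cos (s + w + aa) := by
  have step1 : (∫ s in (0:ℝ)..T, ∫ t in (0:ℝ)..T,
        Real.cos (s + aa) * Real.cos (t + aa) * |s - t| ^ γ) =
      ∫ s, ((∫ w, F1 γ T aa s w) + (∫ w, F2 γ T aa s w)) := by
    rw [intervalIntegral.integral_of_le hT]
    rw [setIntegral_congr_fun measurableSet_Ioc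
      (fun s hs => inner_split γ T aa hγ hs)]
    apply setIntegral_eq_integral_of_forall_compl_eq_zero
    intro s hs
    have h1 : (∫ w, F1 γ T aa s w) = 0 := by
      have : (fun w => F1 γ T aa s w) = fun _ => (0:ℝ) := by
        funext w; unfold F1; rw [if_neg]
        rintro ⟨hw, hws, hsT⟩
        exact hs ⟨lt_of_lt_of_le hw hws, hsT⟩
      rw [this, integral_zero]
    have h2 : (∫ w, F2 γ T aa s w) = 0 := by
      have : (fun w => F2 γ T aa s w) = fun _ => (0:ℝ) := by
        funext w; unfold F2; rw [if_neg]
        rintro ⟨hw, hs', hswT⟩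
        exact hs ⟨hs', by linarith⟩
      rw [this, integral_zero]
    rw [h1, h2, add_zero]
  have hI1 : Integrable (fun s => ∫ w, F1 γ T aa s w) volume :=
    (int_F1 γ T aa hγ hT).integral_prod_left
  have hI2 : Integrable (fun s => ∫ w, F2 γ T aa s w) volume :=
    (int_F2 γ T aa hγ hT).integral_prod_left
  rw [step1, integral_add hI1 hI2]
  congr 1
  · rw [integral_integral_swap (int_F1 γ T aa hγ hT)]
    have he : (fun w => ∫ s, F1 γ T aa s w) = (Ioc (0:ℝ) T).indicator
        (fun w => w ^ γ * ∫ u in w..T, Real.cos (u + aa) * Real.cos (u - w + aa)) := by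
      funext w
      by_cases hw : w ∈ Ioc (0:ℝ) T
      · rw [indicator_of_mem hw, F1_slice_s γ T aa hw]
      · rw [indicator_of_notMem hw, F1_slice_s_zero γ T aa hw]
    rw [he, integral_indicator measurableSet_Ioc, ← intervalIntegral.integral_of_le hT]
  · rw [integral_integral_swap (int_F2 γ T aa hγ hT)]
    have he : (fun w => ∫ s, F2 γ T aa s w) = (Ioc (0:ℝ) T).indicator
        (fun w => w ^ γ *
          ∫ s in (0:ℝ)..(T - w), Real.cos (s + aa) * Real.cos (s + w + aa)) := by
      funext w
      by_cases hw : w ∈ Ioc (0:ℝ) T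
      · rw [indicator_of_mem hw, F2_slice_s γ T aa hw]
      · rw [indicator_of_notMem hw, F2_slice_s_zero γ T aa hw]
    rw [he, integral_indicator measurableSet_Ioc, ← intervalIntegral.integral_of_le hT]


lemma psi (aa T w : ℝ) :
    (∫ u in w..T, Real.cos (u + aa) * Real.cos (u - w + aa))
      = (T - w) * Real.cos w / 2 + Real.sin (T - w) * Real.cos (T + 2*aa) / 2 := by
  have hderiv : ∀ u ∈ Set.uIcc w T, HasDerivAt
      (fun u => u * Real.cos w / 2 + Real.sin (2*u + 2*aa - w) / 4)
      (Real.cos (u + aa) * Real.cos (u - w + aa)) u := by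
    intro u _
    have h1 : HasDerivAt (fun u : ℝ => u * Real.cos w / 2) (Real.cos w / 2) u := by
      simpa using (hasDerivAt_mul_const (Real.cos w) (x := u)).div_const 2
    have hlin : HasDerivAt (fun u : ℝ => 2*u + 2*aa - w) 2 u := by
      simpa using (((hasDerivAt_id u).const_mul 2).add_const (2*aa)).sub_const w
    have h2 : HasDerivAt (fun u : ℝ => Real.sin (2*u + 2*aa - w))
        (Real.cos (2*u + 2*aa - w) * 2) u := by
      have := (Real.hasDerivAt_sin (2*u + 2*aa - w)).comp u hlin; exact this
    have h := h1.add (h2.div_const 4)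
    refine h.congr_deriv ?_
    have e1 := Real.cos_sub (u + aa) (u - w + aa)
    have e2 := Real.cos_add (u + aa) (u - w + aa)
    have hpc : Real.cos (u + aa) * Real.cos (u - w + aa)
        = (Real.cos ((u + aa) - (u - w + aa)) + Real.cos ((u + aa) + (u - w + aa))) / 2 := by
      linear_combination -(e1 + e2) / 2
    rw [hpc, show (u + aa) - (u - w + aa) = w by ring,
      show (u + aa) + (u - w + aa) = 2*u + 2*aa - w by ring]
    ring
  rw [intervalIntegral.integral_eq_sub_of_hasDerivAt hderiv
    ((Continuous.mul (by continuity) (by continuity)).intervalIntegrable w T)]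
  have hs := Real.sin_sub_sin (2*T + 2*aa - w) (2*w + 2*aa - w)
  rw [show (2*T + 2*aa - w - (2*w + 2*aa - w)) / 2 = T - w by ring,
    show (2*T + 2*aa - w + (2*w + 2*aa - w)) / 2 = T + 2*aa by ring] at hs
  linear_combination hs / 4

end CosFbmAux


open CosFbmAux in
/-- Lemma (norms of cos in the fBm Hilbert space): for `H ∈ (1/2,1)`, `α_H = H(2H-1)`,
and `a < b`,
`α_H ∫_a^b ∫_a^b cos u cos v |u-v|^{2H-2} du dv
  = α_H ∫_0^{b-a} cos v · v^{2H-2} (b-a-v) dv + α_H cos(a+b) ∫_0^{b-a} v^{2H-2} sin(b-a-v) dv`. -/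
theorem cos_norm_fbm_hilbert (H : ℝ) (hH : H ∈ Set.Ioo (1/2 : ℝ) 1)
    (a b : ℝ) (hab : a < b) :
    H * (2*H - 1) *
      ∫ u in a..b, ∫ v in a..b, Real.cos u * Real.cos v * |u - v| ^ (2*H - 2) =
    H * (2*H - 1) *
      (∫ v in (0:ℝ)..(b - a), Real.cos v * v ^ (2*H - 2) * (b - a - v)) +
    H * (2*H - 1) * Real.cos (a + b) *
      ∫ v in (0:ℝ)..(b - a), v ^ (2*H - 2) * Real.sin (b - a - v) := by
  obtain ⟨hH1, hH2⟩ := hH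
  have hγ : (-1:ℝ) < 2*H - 2 := by linarith
  have hT : (0:ℝ) ≤ b - a := by linarith
  suffices h : (∫ u in a..b, ∫ v in a..b, Real.cos u * Real.cos v * |u - v| ^ (2*H - 2))
      = (∫ v in (0:ℝ)..(b - a), Real.cos v * v ^ (2*H - 2) * (b - a - v))
        + Real.cos (a + b) * ∫ v in (0:ℝ)..(b - a), v ^ (2*H - 2) * Real.sin (b - a - v) by
    rw [h]; ring
  -- translation to [0, b-a]
  have htrans : (∫ u in a..b, ∫ v in a..b, Real.cos u * Real.cos v * |u - v| ^ (2*H - 2))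
      = ∫ s in (0:ℝ)..(b - a), ∫ t in (0:ℝ)..(b - a),
          Real.cos (s + a) * Real.cos (t + a) * |s - t| ^ (2*H - 2) := by
    have hin : ∀ u : ℝ, (∫ v in a..b, Real.cos u * Real.cos v * |u - v| ^ (2*H - 2))
        = ∫ t in (0:ℝ)..(b - a), Real.cos u * Real.cos (t + a) * |u - (t + a)| ^ (2*H - 2) := by
      intro u
      have h' := intervalIntegral.integral_comp_add_right (a := (0:ℝ)) (b := b - a)
        (fun v => Real.cos u * Real.cos v * |u - v| ^ (2*H - 2)) a
      rw [zero_add, sub_add_cancel] at h'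
      exact h'.symm
    have hout := intervalIntegral.integral_comp_add_right (a := (0:ℝ)) (b := b - a)
      (fun u => ∫ v in a..b, Real.cos u * Real.cos v * |u - v| ^ (2*H - 2)) a
    rw [zero_add, sub_add_cancel] at hout
    rw [← hout]
    apply intervalIntegral.integral_congr
    intro s _
    simp only
    rw [hin (s + a)]
    apply intervalIntegral.integral_congr
    intro t _
    simp only
    rw [show s + a - (t + a) = s - t by ring]
  rw [htrans, CosFbmAux.key (2*H - 2) (b - a) a hγ hT]
  -- second term's inner integral equals the first one's
  have hconv : ∀ w : ℝ,
      (∫ s in (0:ℝ)..(b - a - w), Real.cos (s + a) * Real.cos (s + w + a))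
        = ∫ u in w..(b - a), Real.cos (u + a) * Real.cos (u - w + a) := by
    intro w
    have h' := intervalIntegral.integral_comp_sub_right (a := w) (b := b - a)
      (fun s => Real.cos (s + a) * Real.cos (s + w + a)) w
    rw [sub_self] at h'
    rw [← h']
    apply intervalIntegral.integral_congr
    intro u _
    simp only
    rw [show u - w + w + a = u + a by ring]
    ring
  -- evaluate the inner trig integral
  have hψ : ∀ w : ℝ, (∫ u in w..(b - a), Real.cos (u + a) * Real.cos (u - w + a))
      = (b - a - w) * Real.cos w / 2 + Real.sin (b - a - w) * Real.cos (a + b) / 2 := by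
    intro w
    rw [CosFbmAux.psi a (b - a) w, show b - a + 2*a = a + b by ring]
  -- rewrite both integrals into a common form and split
  have hmain : ∀ (K : ℝ → ℝ), K = (fun w => w ^ (2*H - 2) *
        ∫ u in w..(b - a), Real.cos (u + a) * Real.cos (u - w + a)) →
      (∫ w in (0:ℝ)..(b - a), K w)
        = (1/2) * (∫ v in (0:ℝ)..(b - a), Real.cos v * v ^ (2*H - 2) * (b - a - v))
          + (1/2) * (Real.cos (a + b) *
              ∫ v in (0:ℝ)..(b - a), v ^ (2*H - 2) * Real.sin (b - a - v)) := by
    intro K hK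
    subst hK
    have hbase : IntervalIntegrable (fun w : ℝ => w ^ (2*H - 2)) volume 0 (b - a) :=
      intervalIntegral.intervalIntegrable_rpow' hγ
    have hii1 : IntervalIntegrable
        (fun v => Real.cos v * v ^ (2*H - 2) * (b - a - v)) volume 0 (b - a) := by
      apply CosFbmAux.II_congr (hbase.mul_continuousOn
        (g := fun v => Real.cos v * (b - a - v)) (by fun_prop))
      intro x _; ring
    have hii2 : IntervalIntegrable
        (fun v => Real.cos (a + b) * (v ^ (2*H - 2) * Real.sin (b - a - v)))
        volume 0 (b - a) := by
      apply CosFbmAux.II_congr (hbase.mul_continuousOn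
        (g := fun v => Real.cos (a + b) * Real.sin (b - a - v)) (by fun_prop))
      intro x _; ring
    have e : (∫ w in (0:ℝ)..(b - a), w ^ (2*H - 2) *
          ∫ u in w..(b - a), Real.cos (u + a) * Real.cos (u - w + a))
        = ∫ w in (0:ℝ)..(b - a),
            ((1/2) * (Real.cos w * w ^ (2*H - 2) * (b - a - w))
              + (1/2) * (Real.cos (a + b) * (w ^ (2*H - 2) * Real.sin (b - a - w)))) := by
      apply intervalIntegral.integral_congr
      intro w _
      simp only
      rw [hψ w]
      ring
    rw [e, intervalIntegral.integral_add ((hii1.const_mul _)) ((hii2.const_mul _)),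
      intervalIntegral.integral_const_mul, intervalIntegral.integral_const_mul,
      intervalIntegral.integral_const_mul]
  have h2nd : (∫ w in (0:ℝ)..(b - a), w ^ (2*H - 2) *
        ∫ s in (0:ℝ)..(b - a - w), Real.cos (s + a) * Real.cos (s + w + a))
      = ∫ w in (0:ℝ)..(b - a), w ^ (2*H - 2) *
          ∫ u in w..(b - a), Real.cos (u + a) * Real.cos (u - w + a) := by
    apply intervalIntegral.integral_congr
    intro w _
    simp only
    rw [hconv w]
  rw [h2nd, hmain _ rfl]
  ring
end

section
/- Let H ∈ (1/2, 1) and set α_H = H(2H−1). Then for every a, b ∈ ℝ with a < b, α_H ∫_a^b ∫_a^b sin(u) sin(v) |u−v|^{2H−2} du dv = α_H ∫_0^{b−a} cos(v) v^{2H−2} (b−a−v) dv − α_H cos(a+b) ∫_0^{b−a} v^{2H−2} sin(b−a−v) dv. -/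
open MeasureTheory Real Set intervalIntegral

lemma sin_mul_sin (x y : ℝ) : Real.sin x * Real.sin y = (Real.cos (x - y) - Real.cos (x + y))/2 := by
  rw [Real.cos_sub, Real.cos_add]; ring

lemma slice_int (t c d : ℝ) : ∫ u in c..d, Real.sin u * Real.sin (u - t)
    = Real.cos t * (d - c) / 2 - (Real.sin (2*d - t) - Real.sin (2*c - t)) / 4 := by
  have h : ∀ u : ℝ, HasDerivAt (fun u => Real.cos t * u / 2 - Real.sin (2*u - t)/4)
      (Real.sin u * Real.sin (u - t)) u := by
    intro u
    have h1 : HasDerivAt (fun u : ℝ => Real.cos t * u / 2) (Real.cos t / 2) u :=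
      by simpa using ((hasDerivAt_id u).const_mul (Real.cos t)).div_const 2
    have h2 : HasDerivAt (fun u : ℝ => 2*u - t) 2 u := by
      simpa using ((hasDerivAt_id u).const_mul 2).sub_const t
    have h3 : HasDerivAt (fun u : ℝ => Real.sin (2*u - t)/4) (Real.cos (2*u - t) * 2 / 4) u :=
      ((Real.hasDerivAt_sin _).comp u h2).div_const 4
    have := h1.sub h3
    refine this.congr_deriv ?_
    rw [sin_mul_sin, show u - (u - t) = t by ring, show u + (u - t) = 2*u - t by ring]
    ring
  rw [integral_eq_sub_of_hasDerivAt (fun u _ => h u)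
    (Continuous.intervalIntegrable (by continuity) c d)]
  ring

lemma absRpowInt {p : ℝ} (hp : -1 < p) (c d : ℝ) :
    IntervalIntegrable (fun t : ℝ => |t| ^ p) volume c d := by
  have key : ∀ e : ℝ, 0 ≤ e → IntervalIntegrable (fun t : ℝ => |t| ^ p) volume 0 e := by
    intro e he
    have := intervalIntegrable_rpow' (a := 0) (b := e) hp
    rw [intervalIntegrable_iff] at this ⊢
    refine this.congr_fun ?_ measurableSet_uIoc
    intro x hx
    rw [uIoc_of_le he] at hx
    simp only []
    rw [abs_of_pos hx.1]
  have key2 : ∀ e : ℝ, IntervalIntegrable (fun t : ℝ => |t| ^ p) volume 0 e := by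
    intro e
    rcases le_total 0 e with he | he
    · exact key e he
    · rw [IntervalIntegrable.iff_comp_neg]
      simpa [abs_neg] using key (-e) (by linarith)
  exact (key2 c).symm.trans (key2 d)

lemma integrable_F {p : ℝ} (hp1 : -1 < p) (a b : ℝ) (hab : a < b) :
    Integrable (Function.uncurry fun u t : ℝ =>
      (Ioc a b).indicator 1 u * (Ico a b).indicator 1 (u - t) *
        (Real.sin u * Real.sin (u - t) * |t| ^ p)) (volume.prod volume) := by
  have hbd : Integrable (fun z : ℝ × ℝ =>
      (Ioc a b).indicator 1 z.1 * (Icc (a - b) (b - a)).indicator (fun t => |t| ^ p) z.2)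
      (volume.prod volume) := by
    apply Integrable.mul_prod
    · rw [integrable_indicator_iff measurableSet_Ioc]
      exact integrableOn_const (by simp)
    · rw [integrable_indicator_iff measurableSet_Icc]
      rw [integrableOn_Icc_iff_integrableOn_Ioc]
      rw [← intervalIntegrable_iff_integrableOn_Ioc_of_le (by linarith)]
      exact absRpowInt hp1 _ _
  have hmeas : AEStronglyMeasurable (Function.uncurry fun u t : ℝ =>
      (Ioc a b).indicator 1 u * (Ico a b).indicator 1 (u - t) *
        (Real.sin u * Real.sin (u - t) * |t| ^ p)) (volume.prod volume) := by
    apply Measurable.aestronglyMeasurable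
    apply Measurable.mul
    apply Measurable.mul
    · exact ((measurable_const.indicator measurableSet_Ioc)).comp measurable_fst
    · exact ((measurable_const.indicator measurableSet_Ico)).comp (measurable_fst.sub measurable_snd)
    · apply Measurable.mul
      apply Measurable.mul
      · exact Real.measurable_sin.comp measurable_fst
      · exact Real.measurable_sin.comp (measurable_fst.sub measurable_snd)
      · fun_prop
  refine hbd.mono hmeas (Filter.Eventually.of_forall fun z => ?_)
  obtain ⟨u, t⟩ := z
  simp only [Function.uncurry]
  by_cases hu : u ∈ Ioc a b
  · by_cases ht : u - t ∈ Ico a b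
    · have htI : t ∈ Icc (a - b) (b - a) := by
        constructor
        · linarith [hu.1, ht.2]
        · linarith [hu.2, ht.1]
      rw [indicator_of_mem hu, indicator_of_mem ht, indicator_of_mem htI]
      simp only [Pi.one_apply, one_mul]
      rw [Real.norm_eq_abs, abs_mul, abs_mul, Real.norm_eq_abs,
        abs_of_nonneg (Real.rpow_nonneg (abs_nonneg t) p)]
      have h1 : |Real.sin u| ≤ 1 := Real.abs_sin_le_one u
      have h2 : |Real.sin (u - t)| ≤ 1 := Real.abs_sin_le_one (u - t)
      have h3 : (0:ℝ) ≤ |t| ^ p := Real.rpow_nonneg (abs_nonneg t) p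
      have h4 : |Real.sin u| * |Real.sin (u - t)| ≤ 1 := by
        nlinarith [abs_nonneg (Real.sin u), abs_nonneg (Real.sin (u-t))]
      nlinarith
    · simp [indicator_of_notMem ht, abs_nonneg,
        Real.rpow_nonneg (abs_nonneg t) p, indicator_nonneg, le_refl]
      positivity
  · simp only [indicator_of_notMem hu, zero_mul, norm_zero]
    positivity

lemma key {p : ℝ} (hp1 : -1 < p) (hp0 : p < 0) (a b : ℝ) (hab : a < b) :
    (∫ u in a..b, ∫ v in a..b, Real.sin u * Real.sin v * |u - v| ^ p)
    = (∫ t in (0:ℝ)..(b - a), Real.cos t * t ^ p * (b - a - t))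
      - Real.cos (a + b) * ∫ t in (0:ℝ)..(b - a), t ^ p * Real.sin (b - a - t) := by
  set L : ℝ := b - a with hL
  have hL0 : 0 < L := by simp [hL]; linarith
  set f : ℝ → ℝ → ℝ := fun u t =>
    (Ioc a b).indicator 1 u * (Ico a b).indicator 1 (u - t) *
      (Real.sin u * Real.sin (u - t) * |t| ^ p) with hf
  set h : ℝ → ℝ := fun t =>
    |t| ^ p * (Real.cos |t| * (L - |t|)/2 - Real.cos (a+b) * Real.sin (L - |t|)/2) with hh
  -- Step 1
  have step1 : (∫ u in a..b, ∫ v in a..b, Real.sin u * Real.sin v * |u - v| ^ p)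
      = ∫ u, ∫ t, f u t := by
    rw [integral_of_le hab.le, ← MeasureTheory.integral_indicator measurableSet_Ioc]
    refine integral_congr_ae (Filter.Eventually.of_forall fun u => ?_)
    by_cases hu : u ∈ Ioc a b
    · rw [indicator_of_mem hu]
      have e1 : (∫ v in a..b, Real.sin u * Real.sin v * |u - v| ^ p)
          = ∫ v in a..b, (fun t => Real.sin u * Real.sin (u - t) * |t| ^ p) (u - v) := by
        refine intervalIntegral.integral_congr fun v _ => ?_
        simp [sub_sub_cancel]
      rw [e1, integral_comp_sub_left (fun t => Real.sin u * Real.sin (u - t) * |t| ^ p) u,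
        integral_of_le (by linarith [hu.1, hu.2]), ← MeasureTheory.integral_indicator measurableSet_Ioc]
      refine integral_congr_ae (Filter.Eventually.of_forall fun t => ?_)
      have hiff : t ∈ Ioc (u - b) (u - a) ↔ u - t ∈ Ico a b := by
        simp only [mem_Ioc, mem_Ico]
        constructor <;> rintro ⟨h1, h2⟩ <;> constructor <;> linarith
      simp only [hf, indicator_of_mem hu, Pi.one_apply, one_mul, indicator_apply]
      by_cases hmem : t ∈ Ioc (u - b) (u - a)
      · rw [if_pos hmem, if_pos (hiff.mp hmem)]; simp [hu.1, hu.2]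
      · rw [if_neg hmem, if_neg (fun hc => hmem (hiff.mpr hc))]; ring
    · rw [indicator_of_notMem hu]
      simp only [hf, indicator_of_notMem hu, zero_mul]
      simp
  -- Step 3 : inner integral after swap
  have step3 : ∀ t : ℝ, (∫ u, f u t) = (Icc (-L) L).indicator h t := by
    intro t
    have hset : ∀ u, f u t = (Ioc a b ∩ Ico (a+t) (b+t)).indicator
        (fun u => Real.sin u * Real.sin (u - t) * |t| ^ p) u := by
      intro u
      have hiff : u - t ∈ Ico a b ↔ u ∈ Ico (a+t) (b+t) := by
        simp only [mem_Ico]; constructor <;> rintro ⟨h1, h2⟩ <;> constructor <;> linarith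
      simp only [hf, indicator_apply, mem_inter_iff, Pi.one_apply]
      by_cases h1 : u ∈ Ioc a b <;> by_cases h2 : u - t ∈ Ico a b <;>
        simp [h1, h2, hiff.symm, hiff.mp, hiff.mpr]
    have hS : MeasurableSet (Ioc a b ∩ Ico (a+t) (b+t)) :=
      measurableSet_Ioc.inter measurableSet_Ico
    simp only [hset]
    rw [MeasureTheory.integral_indicator hS]
    rcases lt_trichotomy t 0 with ht | ht | ht
    · by_cases htL : -L ≤ t
      · have hSe : Ioc a b ∩ Ico (a+t) (b+t) = Ioo a (b+t) := by
          ext u; simp only [mem_inter_iff, mem_Ioc, mem_Ico, mem_Ioo]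
          constructor
          · rintro ⟨⟨h1, h2⟩, h3, h4⟩; exact ⟨h1, h4⟩
          · rintro ⟨h1, h2⟩
            refine ⟨⟨h1, by linarith⟩, by linarith, h2⟩
        rw [hSe, ← MeasureTheory.integral_Ioc_eq_integral_Ioo, ← integral_of_le (by linarith),
          intervalIntegral.integral_mul_const, slice_int,
          indicator_of_mem (by constructor <;> linarith : t ∈ Icc (-L) L)]
        rw [hh]
        simp only [abs_of_neg ht, Real.cos_neg]
        rw [Real.sin_sub_sin,
          show (2*(b+t) - t - (2*a - t))/2 = L + t by rw [hL]; ring,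
          show (2*(b+t) - t + (2*a - t))/2 = a + b by ring,
          show L - -t = L + t by ring]
        rw [hL]; ring
      · have hSe : Ioc a b ∩ Ico (a+t) (b+t) = ∅ := by
          ext u; simp only [mem_inter_iff, mem_Ioc, mem_Ico, mem_empty_iff_false, iff_false]
          rintro ⟨⟨h1, h2⟩, h3, h4⟩
          have : t < -L := lt_of_not_ge htL
          rw [hL] at this; linarith
        rw [hSe, indicator_of_notMem (by simp only [mem_Icc, not_and_or]; left; linarith [lt_of_not_ge htL] : t ∉ Icc (-L) L)]
        simp
    · subst ht
      have hz : |(0:ℝ)| ^ p = 0 := by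
        rw [abs_zero, Real.zero_rpow hp0.ne]
      simp only [hz, mul_zero, MeasureTheory.integral_zero, hh]
      rw [indicator_apply]
      split <;> simp [abs_zero, Real.zero_rpow hp0.ne]
    · by_cases htL : t ≤ L
      · have hSe : Ioc a b ∩ Ico (a+t) (b+t) = Icc (a+t) b := by
          ext u; simp only [mem_inter_iff, mem_Ioc, mem_Ico, mem_Icc]
          constructor
          · rintro ⟨⟨h1, h2⟩, h3, h4⟩; exact ⟨h3, h2⟩
          · rintro ⟨h1, h2⟩
            refine ⟨⟨by linarith, h2⟩, h1, by linarith⟩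
        rw [hSe, integral_Icc_eq_integral_Ioc, ← integral_of_le (by rw [hL] at htL; linarith),
          intervalIntegral.integral_mul_const, slice_int,
          indicator_of_mem (by constructor <;> linarith : t ∈ Icc (-L) L)]
        rw [hh]
        simp only [abs_of_pos ht]
        rw [Real.sin_sub_sin,
          show (2*b - t - (2*(a+t) - t))/2 = L - t by rw [hL]; ring,
          show (2*b - t + (2*(a+t) - t))/2 = a + b by ring]
        rw [hL]; ring
      · have hSe : Ioc a b ∩ Ico (a+t) (b+t) = ∅ := by
          ext u; simp only [mem_inter_iff, mem_Ioc, mem_Ico, mem_empty_iff_false, iff_false]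
          rintro ⟨⟨h1, h2⟩, h3, h4⟩
          have : L < t := lt_of_not_ge htL
          rw [hL] at this; linarith
        rw [hSe, indicator_of_notMem (by simp only [mem_Icc, not_and_or]; right; linarith [lt_of_not_ge htL] : t ∉ Icc (-L) L)]
        simp
  -- assemble
  have hcont : Continuous fun t : ℝ =>
      Real.cos |t| * (L - |t|)/2 - Real.cos (a+b) * Real.sin (L - |t|)/2 :=
    (((Real.continuous_cos.comp continuous_abs).mul (continuous_const.sub continuous_abs)).div_const 2).sub
      ((continuous_const.mul (Real.continuous_sin.comp (continuous_const.sub continuous_abs))).div_const 2)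
  have hInt : ∀ c d : ℝ, IntervalIntegrable h volume c d := fun c d =>
    (absRpowInt hp1 c d).mul_continuousOn hcont.continuousOn
  have step4 : (∫ u, ∫ t, f u t) = 2 * ∫ t in (0:ℝ)..L, h t := by
    rw [integral_integral_swap (integrable_F hp1 a b hab)]
    have : (∫ t, ∫ u, f u t) = ∫ t, (Icc (-L) L).indicator h t :=
      integral_congr_ae (Filter.Eventually.of_forall fun t => step3 t)
    rw [this, MeasureTheory.integral_indicator measurableSet_Icc, integral_Icc_eq_integral_Ioc,
      ← integral_of_le (by linarith)]
    rw [← integral_add_adjacent_intervals (a := -L) (b := 0) (c := L) (hInt _ _) (hInt _ _)]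
    have e2 : (∫ t in (-L)..(0:ℝ), h t) = ∫ t in (0:ℝ)..L, h t := by
      have := integral_comp_neg h (a := 0) (b := L)
      simp only [neg_zero] at this
      rw [← this]
      refine intervalIntegral.integral_congr fun t _ => ?_
      simp only [hh, abs_neg]
    rw [e2]; ring
  have i1 : IntervalIntegrable (fun t : ℝ => t ^ p * (Real.cos t * (L - t))) volume 0 L :=
    (intervalIntegrable_rpow' hp1).mul_continuousOn
      (Real.continuous_cos.mul (continuous_const.sub continuous_id)).continuousOn
  have i2 : IntervalIntegrable (fun t : ℝ => t ^ p * Real.sin (L - t)) volume 0 L :=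
    (intervalIntegrable_rpow' hp1).mul_continuousOn
      (Real.continuous_sin.comp (continuous_const.sub continuous_id)).continuousOn
  have e3 : (∫ t in (0:ℝ)..L, h t)
      = ∫ t in (0:ℝ)..L, (t ^ p * (Real.cos t * (L - t)) / 2
          - Real.cos (a+b) / 2 * (t ^ p * Real.sin (L - t))) := by
    refine intervalIntegral.integral_congr fun t ht => ?_
    rw [uIcc_of_le hL0.le] at ht
    simp only [hh, abs_of_nonneg ht.1]
    ring
  rw [step1, step4, e3, intervalIntegral.integral_sub (i1.div_const 2) (i2.const_mul _),
    intervalIntegral.integral_div, intervalIntegral.integral_const_mul]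
  have e4 : (∫ t in (0:ℝ)..L, Real.cos t * t ^ p * (L - t))
      = ∫ t in (0:ℝ)..L, t ^ p * (Real.cos t * (L - t)) :=
    intervalIntegral.integral_congr fun t _ => by ring
  rw [e4]; ring

/-- Lemma (norm of sin in the fBm Hilbert space): for `H ∈ (1/2,1)`, `α_H = H(2H-1)`,
and `a < b`,
`α_H ∫_a^b ∫_a^b sin u sin v |u-v|^{2H-2} du dv
  = α_H ∫_0^{b-a} cos v · v^{2H-2} (b-a-v) dv − α_H cos(a+b) ∫_0^{b-a} v^{2H-2} sin(b-a-v) dv`. -/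
theorem sin_norm_fbm_hilbert (H : ℝ) (hH : H ∈ Set.Ioo (1/2 : ℝ) 1)
    (a b : ℝ) (hab : a < b) :
    H * (2*H - 1) *
      ∫ u in a..b, ∫ v in a..b, Real.sin u * Real.sin v * |u - v| ^ (2*H - 2) =
    H * (2*H - 1) *
      (∫ v in (0:ℝ)..(b - a), Real.cos v * v ^ (2*H - 2) * (b - a - v)) -
    H * (2*H - 1) * Real.cos (a + b) *
      ∫ v in (0:ℝ)..(b - a), v ^ (2*H - 2) * Real.sin (b - a - v) := by
  obtain ⟨h1, h2⟩ := hH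
  rw [key (by linarith) (by linarith) a b hab]
  ring
end

section
/- Let H ∈ (1/2, 1). Then for every x > 0, the integral ∫_0^x v^{2H−2} cos(v) (x−v) dv is strictly positive. -/
open MeasureTheory Set

noncomputable def W (β x r : ℝ) : ℝ :=
  β * (β + 1) * r ^ (-β - 2) * (x - r) + 2 * β * r ^ (-β - 1)

lemma W_nonneg {β x r : ℝ} (hβ : 0 ≤ β) (hr : 0 < r) (hrx : r ≤ x) : 0 ≤ W β x r := by
  unfold W
  have h1 : (0:ℝ) ≤ r ^ (-β - 2) := Real.rpow_nonneg hr.le _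
  have h2 : (0:ℝ) ≤ r ^ (-β - 1) := Real.rpow_nonneg hr.le _
  have h3 : (0:ℝ) ≤ β * (β + 1) * r ^ (-β - 2) * (x - r) :=
    mul_nonneg (mul_nonneg (mul_nonneg hβ (by linarith)) h1) (by linarith)
  have h4 : (0:ℝ) ≤ 2 * β * r ^ (-β - 1) := mul_nonneg (by linarith) h2
  linarith

lemma W_pos {β x r : ℝ} (hβ : 0 < β) (hr : 0 < r) (hrx : r ≤ x) : 0 < W β x r := by
  unfold W
  have h1 : (0:ℝ) ≤ r ^ (-β - 2) := Real.rpow_nonneg hr.le _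
  have h2 : (0:ℝ) < r ^ (-β - 1) := Real.rpow_pos_of_pos hr _
  have h3 : (0:ℝ) ≤ β * (β + 1) * r ^ (-β - 2) * (x - r) :=
    mul_nonneg (mul_nonneg (mul_nonneg hβ.le (by linarith)) h1) (by linarith)
  have h4 : (0:ℝ) < 2 * β * r ^ (-β - 1) := by positivity
  linarith

lemma W_continuousAt {β x t : ℝ} (ht : t ≠ 0) : ContinuousAt (W β x) t := by
  unfold W
  have c1 : ContinuousAt (fun r : ℝ => r ^ (-β - 2)) t :=
    Real.continuousAt_rpow_const t _ (Or.inl ht)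
  have c2 : ContinuousAt (fun r : ℝ => r ^ (-β - 1)) t :=
    Real.continuousAt_rpow_const t _ (Or.inl ht)
  exact ((continuousAt_const.mul c1).mul (by fun_prop)).add (continuousAt_const.mul c2)

lemma W_measurable (β x : ℝ) : Measurable (W β x) := by
  unfold W; fun_prop

/-- ∫_0^r (r-v) cos v dv = 1 - cos r -/
lemma ftc_cos (r : ℝ) : ∫ v in (0:ℝ)..r, (r - v) * Real.cos v = 1 - Real.cos r := by
  have h : ∀ t ∈ Set.uIcc (0:ℝ) r,
      HasDerivAt (fun v => (r - v) * Real.sin v - Real.cos v) ((r - t) * Real.cos t) t := by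
    intro t _
    have h1 : HasDerivAt (fun v : ℝ => (r - v) * Real.sin v)
        ((-1) * Real.sin t + (r - t) * Real.cos t) t :=
      ((hasDerivAt_id t).const_sub r).mul (Real.hasDerivAt_sin t)
    have h2 : HasDerivAt (fun v : ℝ => Real.cos v) (-Real.sin t) t := Real.hasDerivAt_cos t
    exact (h1.sub h2).congr_deriv (by ring)
  have hint : IntervalIntegrable (fun t => (r - t) * Real.cos t) volume 0 r :=
    (continuous_const.sub continuous_id').mul Real.continuous_cos |>.intervalIntegrable 0 r
  have := intervalIntegral.integral_eq_sub_of_hasDerivAt h hint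
  rw [this]; simp; ring

lemma W_hasDeriv {β x t : ℝ} (ht : t ≠ 0) :
    HasDerivAt (fun r : ℝ => -β * (r ^ (-β - 1) * (x - r)) - r ^ (-β)) (W β x t) t := by
  have h0 : HasDerivAt (fun r : ℝ => r ^ (-β)) (-β * t ^ (-β - 1)) t := by
    have := Real.hasDerivAt_rpow_const (p := -β) (Or.inl ht)
    simpa [sub_eq_add_neg] using this
  have h1 : HasDerivAt (fun r : ℝ => r ^ (-β - 1)) ((-β - 1) * t ^ (-β - 2)) t := by
    have := Real.hasDerivAt_rpow_const (p := -β - 1) (Or.inl ht)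
    have e : -β - 1 - 1 = -β - 2 := by ring
    rwa [e] at this
  have h2 : HasDerivAt (fun r : ℝ => r ^ (-β - 1) * (x - r))
      ((-β - 1) * t ^ (-β - 2) * (x - t) + t ^ (-β - 1) * (-1)) t := by
    exact h1.mul (((hasDerivAt_id t).const_sub x))
  have := (h2.const_mul (-β)).sub h0
  refine this.congr_deriv ?_
  simp only [W]; ring

lemma ftc_W {β x v : ℝ} (hv : 0 < v) (hvx : v ≤ x) :
    ∫ r in v..x, (r - v) * W β x r = v ^ (-β) * (x - v) - (x - v) * x ^ (-β) := by
  set g : ℝ → ℝ := fun r => -β * (r ^ (-β - 1) * (x - r)) - r ^ (-β) with hg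
  have hW : ∀ t ∈ Set.uIcc v x, HasDerivAt (fun r => (r - v) * g r - r ^ (-β) * (x - r))
      ((t - v) * W β x t) t := by
    intro t htm
    rw [Set.uIcc_of_le hvx] at htm
    have ht : t ≠ 0 := by nlinarith [htm.1]
    have hd1 : HasDerivAt (fun r : ℝ => (r - v) * g r) (1 * g t + (t - v) * W β x t) t :=
      ((hasDerivAt_id t).sub_const v).mul (W_hasDeriv ht)
    have h0 : HasDerivAt (fun r : ℝ => r ^ (-β)) (-β * t ^ (-β - 1)) t := by
      have := Real.hasDerivAt_rpow_const (p := -β) (Or.inl ht)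
      simpa [sub_eq_add_neg] using this
    have hd2 : HasDerivAt (fun r : ℝ => r ^ (-β) * (x - r))
        (-β * t ^ (-β - 1) * (x - t) + t ^ (-β) * (-1)) t :=
      h0.mul ((hasDerivAt_id t).const_sub x)
    have := hd1.sub hd2
    refine this.congr_deriv ?_
    simp only [hg]; ring
  have hcont : ContinuousOn (fun t => (t - v) * W β x t) (Set.uIcc v x) := by
    rw [Set.uIcc_of_le hvx]
    have hne : ∀ t ∈ Set.Icc v x, t ≠ 0 := fun t ht => by nlinarith [ht.1]
    apply ContinuousOn.mul (by fun_prop)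
    intro t ht
    exact (W_continuousAt (hne t ht)).continuousWithinAt
  have hint : IntervalIntegrable (fun t => (t - v) * W β x t) volume v x := by
    rw [Set.uIcc_of_le hvx] at hcont
    exact hcont.intervalIntegrable_of_Icc hvx
  have := intervalIntegral.integral_eq_sub_of_hasDerivAt hW hint
  rw [this]
  simp only [sub_self, mul_zero, zero_mul, zero_sub, mul_comm]
  ring

lemma WIntOn {β x v : ℝ} (hv : 0 < v) (hvx : v ≤ x) :
    IntegrableOn (fun r => (r - v) * W β x r) (Ioo v x) volume := by
  have hcont : ContinuousOn (fun r => (r - v) * W β x r) (Icc v x) := by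
    apply ContinuousOn.mul (by fun_prop)
    intro t ht
    exact (W_continuousAt (by nlinarith [ht.1] : t ≠ 0)).continuousWithinAt
  exact hcont.integrableOn_Icc.mono_set Ioo_subset_Icc_self

lemma key_s3 {β x : ℝ} (hβ0 : 0 < β) (hβ1 : β < 1) (hx : 0 < x) :
    (∫ v in (0:ℝ)..x, v ^ (-β) * ((x - v) * Real.cos v))
      = x ^ (-β) * (1 - Real.cos x) + ∫ r in (0:ℝ)..x, W β x r * (1 - Real.cos r)
    ∧ IntervalIntegrable (fun r => W β x r * (1 - Real.cos r)) volume 0 x := by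
  classical
  set f : ℝ → ℝ → ℝ := fun v r =>
    if 0 < v ∧ v < r ∧ r < x then Real.cos v * ((r - v) * W β x r) else 0 with hf
  have hS : MeasurableSet {p : ℝ × ℝ | 0 < p.1 ∧ p.1 < p.2 ∧ p.2 < x} := by
    refine MeasurableSet.inter ?_ (MeasurableSet.inter ?_ ?_)
    · exact measurableSet_lt measurable_const measurable_fst
    · exact measurableSet_lt measurable_fst measurable_snd
    · exact measurableSet_lt measurable_snd measurable_const
  have hWm := W_measurable β x
  have hgm : Measurable (fun p : ℝ × ℝ => Real.cos p.1 * ((p.2 - p.1) * W β x p.2)) := by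
    fun_prop
  have hmeas : Measurable (Function.uncurry f) := by
    have he : Function.uncurry f = fun p : ℝ × ℝ =>
        if p ∈ {p : ℝ × ℝ | 0 < p.1 ∧ p.1 < p.2 ∧ p.2 < x} then
          Real.cos p.1 * ((p.2 - p.1) * W β x p.2) else 0 := rfl
    rw [he]
    exact Measurable.ite hS hgm measurable_const
  -- descriptions of sections
  have fv_in : ∀ v ∈ Ioo (0:ℝ) x,
      f v = (Ioo v x).indicator (fun r => Real.cos v * ((r - v) * W β x r)) := by
    intro v hv; funext r
    by_cases hr : r ∈ Ioo v x
    · rw [indicator_of_mem hr]; exact if_pos ⟨hv.1, hr.1, hr.2⟩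
    · rw [indicator_of_notMem hr]; exact if_neg (fun h => hr ⟨h.2.1, h.2.2⟩)
  have fv_out : ∀ v, v ∉ Ioo (0:ℝ) x → f v = 0 := by
    intro v hv; funext r; simp only [hf, Pi.zero_apply]
    exact if_neg (fun h => hv ⟨h.1, lt_trans h.2.1 h.2.2⟩)
  have fr_in : ∀ r ∈ Ioo (0:ℝ) x, (fun v => f v r)
      = (Ioo (0:ℝ) r).indicator (fun v => Real.cos v * ((r - v) * W β x r)) := by
    intro r hr; funext v
    by_cases hv : v ∈ Ioo (0:ℝ) r
    · rw [indicator_of_mem hv]; exact if_pos ⟨hv.1, hv.2, hr.2⟩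
    · rw [indicator_of_notMem hv]; exact if_neg (fun h => hv ⟨h.1, h.2.1⟩)
  have fr_out : ∀ r, r ∉ Ioo (0:ℝ) x → (fun v => f v r) = 0 := by
    intro r hr; funext v; simp only [hf, Pi.zero_apply]
    exact if_neg (fun h => hr ⟨lt_trans h.1 h.2.1, h.2.2⟩)
  -- integrable sections
  have hsec : ∀ v, Integrable (f v) volume := by
    intro v
    by_cases hv : v ∈ Ioo (0:ℝ) x
    · rw [fv_in v hv, integrable_indicator_iff measurableSet_Ioo]
      exact (WIntOn hv.1 hv.2.le).const_mul _
    · rw [fv_out v hv]; exact integrable_zero _ _ _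
  -- inner integral in r
  have int_fv : ∀ v, (∫ r, f v r) = (Ioo (0:ℝ) x).indicator
      (fun v => Real.cos v * (v ^ (-β) * (x - v) - (x - v) * x ^ (-β))) v := by
    intro v
    by_cases hv : v ∈ Ioo (0:ℝ) x
    · rw [indicator_of_mem hv, fv_in v hv, integral_indicator measurableSet_Ioo,
        integral_const_mul]
      congr 1
      rw [← integral_Ioc_eq_integral_Ioo, ← intervalIntegral.integral_of_le hv.2.le]
      exact ftc_W hv.1 hv.2.le
    · rw [indicator_of_notMem hv, fv_out v hv]; simp
  -- inner integral in v
  have int_fr : ∀ r, (∫ v, f v r) = (Ioo (0:ℝ) x).indicator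
      (fun r => W β x r * (1 - Real.cos r)) r := by
    intro r
    by_cases hr : r ∈ Ioo (0:ℝ) x
    · rw [indicator_of_mem hr, fr_in r hr, integral_indicator measurableSet_Ioo]
      have he : ∀ v, Real.cos v * ((r - v) * W β x r)
          = ((r - v) * Real.cos v) * W β x r := fun v => by ring
      simp_rw [he]
      rw [integral_mul_const, ← integral_Ioc_eq_integral_Ioo,
        ← intervalIntegral.integral_of_le hr.1.le, ftc_cos r]
      ring
    · rw [indicator_of_notMem hr, fr_out r hr]; simp
  -- domination
  have hbound : Integrable ((Ioo (0:ℝ) x).indicator (fun v => v ^ (-β) * (x - v))) volume := by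
    rw [integrable_indicator_iff measurableSet_Ioo]
    have h : IntervalIntegrable (fun v : ℝ => v ^ (-β) * (x - v)) volume 0 x :=
      (intervalIntegral.intervalIntegrable_rpow' (by linarith)).mul_continuousOn (by fun_prop)
    exact (intervalIntegrable_iff_integrableOn_Ioo_of_le hx.le).mp h
  have hnormint : Integrable (fun v => ∫ r, ‖f v r‖) volume := by
    apply Integrable.mono' hbound hmeas.aestronglyMeasurable.norm.integral_prod_right'
    refine Filter.Eventually.of_forall (fun v => ?_)
    rw [Real.norm_of_nonneg (integral_nonneg (fun r => norm_nonneg _))]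
    show (∫ r, ‖f v r‖) ≤ (Ioo (0:ℝ) x).indicator (fun v => v ^ (-β) * (x - v)) v
    by_cases hv : v ∈ Ioo (0:ℝ) x
    · have hb : IntegrableOn (fun r => (r - v) * W β x r) (Ioo v x) volume :=
        WIntOn hv.1 hv.2.le
      have hnorm_eq : (fun r => ‖f v r‖)
          = (Ioo v x).indicator (fun r => ‖Real.cos v * ((r - v) * W β x r)‖) := by
        rw [fv_in v hv]; funext r
        rw [norm_indicator_eq_indicator_norm]
      calc ∫ r, ‖f v r‖ = ∫ r in Ioo v x, ‖Real.cos v * ((r - v) * W β x r)‖ := by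
            rw [hnorm_eq, integral_indicator measurableSet_Ioo]
        _ ≤ ∫ r in Ioo v x, (r - v) * W β x r := by
            apply setIntegral_mono_on ((hb.const_mul _).norm) hb measurableSet_Ioo
            intro r hr
            rw [norm_mul]
            have h1 : ‖Real.cos v‖ ≤ 1 := by
              rw [Real.norm_eq_abs]; exact Real.abs_cos_le_one v
            have h2 : 0 ≤ (r - v) * W β x r :=
              mul_nonneg (by linarith [hr.1]) (W_nonneg hβ0.le (lt_trans hv.1 hr.1) hr.2.le)
            calc ‖Real.cos v‖ * ‖(r - v) * W β x r‖ ≤ 1 * ‖(r - v) * W β x r‖ :=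
                  mul_le_mul_of_nonneg_right h1 (norm_nonneg _)
              _ = (r - v) * W β x r := by rw [one_mul, Real.norm_of_nonneg h2]
        _ = v ^ (-β) * (x - v) - (x - v) * x ^ (-β) := by
            rw [← integral_Ioc_eq_integral_Ioo, ← intervalIntegral.integral_of_le hv.2.le]
            exact ftc_W hv.1 hv.2.le
        _ ≤ (Ioo (0:ℝ) x).indicator (fun v => v ^ (-β) * (x - v)) v := by
            rw [indicator_of_mem hv]
            have : 0 ≤ (x - v) * x ^ (-β) :=
              mul_nonneg (by linarith [hv.2]) (Real.rpow_nonneg hx.le _)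
            linarith
    · rw [fv_out v hv]
      simp only [Pi.zero_apply, norm_zero, integral_zero]
      rw [indicator_of_notMem hv]
  have hIntUncurry : Integrable (Function.uncurry f) (volume.prod volume) :=
    (integrable_prod_iff hmeas.aestronglyMeasurable).2
      ⟨Filter.Eventually.of_forall hsec, hnormint⟩
  -- Fubini
  have hswap : (∫ v, ∫ r, f v r) = ∫ r, ∫ v, f v r :=
    integral_integral_swap hIntUncurry
  have hL : (∫ v, ∫ r, f v r)
      = ∫ v in (0:ℝ)..x, Real.cos v * (v ^ (-β) * (x - v) - (x - v) * x ^ (-β)) := by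
    rw [integral_congr_ae (Filter.Eventually.of_forall int_fv),
      integral_indicator measurableSet_Ioo, ← integral_Ioc_eq_integral_Ioo,
      ← intervalIntegral.integral_of_le hx.le]
  have hR : (∫ r, ∫ v, f v r) = ∫ r in (0:ℝ)..x, W β x r * (1 - Real.cos r) := by
    rw [integral_congr_ae (Filter.Eventually.of_forall int_fr),
      integral_indicator measurableSet_Ioo, ← integral_Ioc_eq_integral_Ioo,
      ← intervalIntegral.integral_of_le hx.le]
  have hident : (∫ v in (0:ℝ)..x, Real.cos v * (v ^ (-β) * (x - v) - (x - v) * x ^ (-β)))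
      = ∫ r in (0:ℝ)..x, W β x r * (1 - Real.cos r) := by
    rw [← hL, ← hR, hswap]
  constructor
  · have i1 : IntervalIntegrable (fun v => v ^ (-β) * ((x - v) * Real.cos v)) volume 0 x :=
      (intervalIntegral.intervalIntegrable_rpow' (by linarith)).mul_continuousOn (by fun_prop)
    have i2 : IntervalIntegrable (fun v => x ^ (-β) * ((x - v) * Real.cos v)) volume 0 x := by
      apply Continuous.intervalIntegrable; fun_prop
    have he : (fun v => Real.cos v * (v ^ (-β) * (x - v) - (x - v) * x ^ (-β)))
        = fun v => v ^ (-β) * ((x - v) * Real.cos v) - x ^ (-β) * ((x - v) * Real.cos v) := by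
      funext v; ring
    rw [he] at hident
    rw [intervalIntegral.integral_sub i1 i2, intervalIntegral.integral_const_mul,
      ftc_cos x] at hident
    linarith [hident]
  · have hint : Integrable (fun r => ∫ v, f v r) volume := by
      have := hIntUncurry.integral_prod_right
      exact this
    have : Integrable ((Ioo (0:ℝ) x).indicator (fun r => W β x r * (1 - Real.cos r))) volume := by
      apply hint.congr
      exact Filter.Eventually.of_forall int_fr
    rw [integrable_indicator_iff measurableSet_Ioo] at this
    exact (intervalIntegrable_iff_integrableOn_Ioo_of_le hx.le).mpr this

/-- For `H ∈ (1/2,1)` and every `x > 0`, `∫_0^x v^{2H-2} cos v (x-v) dv > 0`. -/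
theorem integral_cos_weight_pos (H : ℝ) (hH : H ∈ Set.Ioo (1/2 : ℝ) 1)
    (x : ℝ) (hx : 0 < x) :
    0 < ∫ v in (0:ℝ)..x, v ^ (2*H - 2) * Real.cos v * (x - v) := by
  obtain ⟨hH1, hH2⟩ := hH
  set β : ℝ := 2 - 2*H with hβ
  have hβ0 : 0 < β := by simp only [hβ]; linarith
  have hβ1 : β < 1 := by simp only [hβ]; linarith
  have hcong : ∀ v : ℝ, v ^ (2*H - 2) * Real.cos v * (x - v)
      = v ^ (-β) * ((x - v) * Real.cos v) := by
    intro v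
    have he : 2*H - 2 = -β := by simp only [hβ]; ring
    rw [he]; ring
  simp only [hcong]
  obtain ⟨hkey, hii⟩ := key_s3 hβ0 hβ1 hx
  rw [hkey]
  -- first term nonneg
  have ht1 : 0 ≤ x ^ (-β) * (1 - Real.cos x) :=
    mul_nonneg (Real.rpow_nonneg hx.le _) (by linarith [Real.cos_le_one x])
  -- second term positive
  set c : ℝ := min x Real.pi with hc
  have hc0 : 0 < c := lt_min hx Real.pi_pos
  have hcx : c ≤ x := min_le_left _ _
  have i1 : IntervalIntegrable (fun r => W β x r * (1 - Real.cos r)) volume 0 c := by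
    apply hii.mono_set
    rw [Set.uIcc_of_le hc0.le, Set.uIcc_of_le hx.le]
    exact Set.Icc_subset_Icc le_rfl hcx
  have i2 : IntervalIntegrable (fun r => W β x r * (1 - Real.cos r)) volume c x := by
    apply hii.mono_set
    rw [Set.uIcc_of_le hcx, Set.uIcc_of_le hx.le]
    exact Set.Icc_subset_Icc hc0.le le_rfl
  have h1 : 0 < ∫ r in (0:ℝ)..c, W β x r * (1 - Real.cos r) := by
    apply intervalIntegral.intervalIntegral_pos_of_pos_on i1 _ hc0
    intro r hr
    have hrx : r ≤ x := le_of_lt (lt_of_lt_of_le hr.2 hcx)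
    have hcos : Real.cos r < 1 := by
      have := Real.cos_lt_cos_of_nonneg_of_le_pi le_rfl
        (le_of_lt (lt_of_lt_of_le hr.2 (min_le_right x Real.pi))) hr.1
      simpa using this
    exact mul_pos (W_pos hβ0 hr.1 hrx) (by linarith)
  have h2 : 0 ≤ ∫ r in c..x, W β x r * (1 - Real.cos r) := by
    apply intervalIntegral.integral_nonneg hcx
    intro u hu
    exact mul_nonneg (W_nonneg hβ0.le (lt_of_lt_of_le hc0 hu.1) hu.2)
      (by linarith [Real.cos_le_one u])
  have hsplit : (∫ r in (0:ℝ)..c, W β x r * (1 - Real.cos r))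
      + ∫ r in c..x, W β x r * (1 - Real.cos r)
      = ∫ r in (0:ℝ)..x, W β x r * (1 - Real.cos r) :=
    intervalIntegral.integral_add_adjacent_intervals i1 i2
  linarith
end

section
/- Let H ∈ (1/2, 1) and set α_H = H(2H−1). Then for every a, b ∈ ℝ with a < b, α_H ∫_a^b ∫_a^b cos(u) cos(v) |u−v|^{2H−2} du dv ≤ 2 α_H ∫_0^{b−a} cos(v) v^{2H−2} (b−a−v) dv. -/
open MeasureTheory Set intervalIntegral Filter

lemma absRpow_ii {β : ℝ} (hβ : -1 < β) (c d : ℝ) :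
    IntervalIntegrable (fun t => |t| ^ β) volume c d := by
  have key : ∀ y : ℝ, IntervalIntegrable (fun t => |t| ^ β) volume 0 y := by
    have pos : ∀ y : ℝ, 0 ≤ y → IntervalIntegrable (fun t => |t| ^ β) volume 0 y := by
      intro y hy
      have := intervalIntegrable_rpow' (a := 0) (b := y) hβ
      rw [intervalIntegrable_iff_integrableOn_Ioc_of_le hy] at this ⊢
      exact this.congr_fun (fun t ht => by rw [abs_of_pos ht.1]) measurableSet_Ioc
    intro y
    rcases le_or_gt 0 y with hy | hy
    · exact pos y hy
    · have h2 := pos (-y) (by linarith)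
      have : (fun t : ℝ => |t| ^ β) = fun t => |(-t)| ^ β := by funext t; rw [abs_neg]
      rw [this]
      have := (IntervalIntegrable.iff_comp_neg (f := fun t => |t| ^ β) (a := 0) (b := -y)).mp h2
      simpa using this
  exact (key c).symm.trans (key d)

lemma shift_ii {β : ℝ} (hβ : -1 < β) (u c d : ℝ) :
    IntervalIntegrable (fun v => |u - v| ^ β) volume c d := by
  have := (absRpow_ii hβ (u - c) (u - d)).comp_sub_left u
  simpa using this

section
variable {β : ℝ} (hβ : -1 < β) (hβ0 : β < 0) {a b : ℝ} (hab : a < b)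

lemma Kmeas {β : ℝ} : Measurable (fun p : ℝ × ℝ => |p.1 - p.2| ^ β) := by
  fun_prop

lemma Kint {β a b : ℝ} (hβ : -1 < β) (hab : a < b) :
    Integrable (fun p : ℝ × ℝ => |p.1 - p.2| ^ β)
      ((volume.restrict (Ioc a b)).prod (volume.restrict (Ioc a b))) := by
  set μ := volume.restrict (Ioc a b)
  refine (integrable_prod_iff (Kmeas (β := β)).aestronglyMeasurable).mpr ⟨?_, ?_⟩
  · refine Filter.Eventually.of_forall (fun u => ?_)
    rw [← IntegrableOn, ← intervalIntegrable_iff_integrableOn_Ioc_of_le hab.le]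
    exact shift_ii hβ u a b
  · have hM : ∀ u ∈ Ioc a b, (∫ v, ‖|u - v| ^ β‖ ∂μ) ≤ ∫ t in (a-b)..(b-a), |t| ^ β := by
      intro u hu
      have h1 : (∫ v, ‖|u - v| ^ β‖ ∂μ) = ∫ v in a..b, |u - v| ^ β := by
        rw [intervalIntegral.integral_of_le hab.le]
        refine setIntegral_congr_fun measurableSet_Ioc (fun v _ => ?_)
        exact Real.norm_of_nonneg (Real.rpow_nonneg (abs_nonneg _) _)
      rw [h1, intervalIntegral.integral_comp_sub_left (fun t => |t| ^ β) u]
      refine intervalIntegral.integral_mono_interval (by linarith [hu.1]) (by linarith [hu.1, hu.2]) (by linarith [hu.2])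
        (Filter.Eventually.of_forall (fun t => Real.rpow_nonneg (abs_nonneg _) _))
        (absRpow_ii hβ _ _)
    have hmeas : AEStronglyMeasurable (fun u => ∫ v, ‖|u - v| ^ β‖ ∂μ) μ :=
      (((Kmeas (β := β)).norm.stronglyMeasurable).integral_prod_right').aestronglyMeasurable
    haveI : IsFiniteMeasure μ := by
      constructor; rw [Measure.restrict_apply_univ]; exact measure_Ioc_lt_top
    refine Integrable.mono' (integrable_const (∫ t in (a-b)..(b-a), |t| ^ β)) hmeas ?_
    refine (ae_restrict_iff' measurableSet_Ioc).mpr (Filter.Eventually.of_forall (fun u hu => ?_))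
    rw [Real.norm_of_nonneg (integral_nonneg (fun v => norm_nonneg _))]
    exact hM u hu

lemma mulKint {β a b : ℝ} (hβ : -1 < β) (hab : a < b) {g h : ℝ → ℝ} (hg : Measurable g) (hh : Measurable h)
    (hg1 : ∀ x, |g x| ≤ 1) (hh1 : ∀ x, |h x| ≤ 1) :
    Integrable (fun p : ℝ × ℝ => g p.1 * h p.2 * |p.1 - p.2| ^ β)
      ((volume.restrict (Ioc a b)).prod (volume.restrict (Ioc a b))) := by
  refine (Kint hβ hab).mono' ?_ ?_
  · exact ((hg.comp measurable_fst).mul (hh.comp measurable_snd)).mul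
      (Kmeas (β := β)) |>.aestronglyMeasurable
  · refine Filter.Eventually.of_forall (fun p => ?_)
    have h0 : (0:ℝ) ≤ |p.1 - p.2| ^ β := Real.rpow_nonneg (abs_nonneg _) _
    rw [Real.norm_eq_abs, abs_mul, abs_mul, abs_of_nonneg h0]
    calc |g p.1| * |h p.2| * (|p.1 - p.2| ^ β) ≤ 1 * 1 * (|p.1 - p.2| ^ β) := by
          gcongr <;> first | exact abs_nonneg _ | exact hg1 p.1 | exact hh1 p.2
      _ = |p.1 - p.2| ^ β := by ring
end

lemma primitive_integral {f : ℝ → ℝ} (hfm : Measurable f)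
    (hf : ∀ c d : ℝ, IntervalIntegrable f volume c d) {c : ℝ} (hc : 0 < c) :
    ∫ t in (0:ℝ)..c, (∫ s in (0:ℝ)..t, f s) = ∫ s in (0:ℝ)..c, f s * (c - s) := by
  set μ0 := volume.restrict (Ioc 0 c) with hμ0
  have hfi : IntegrableOn f (Ioc 0 c) :=
    (intervalIntegrable_iff_integrableOn_Ioc_of_le hc.le).mp (hf 0 c)
  set Φ : ℝ → ℝ → ℝ := fun t s => if s ≤ t then f s else 0 with hΦ
  have hΦmeas : Measurable (Function.uncurry Φ) := by
    apply Measurable.ite (measurableSet_le measurable_snd measurable_fst)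
    · exact hfm.comp measurable_snd
    · exact measurable_const
  have hΦint : Integrable (Function.uncurry Φ) (μ0.prod μ0) := by
    refine (integrable_prod_iff hΦmeas.aestronglyMeasurable).mpr ⟨?_, ?_⟩
    · refine Filter.Eventually.of_forall (fun t => ?_)
      simp only [Function.uncurry_apply_pair]
      have : (fun s => Φ t s) = fun s => (Iic t).indicator f s := by
        funext s; simp [hΦ, Set.indicator_apply]
      rw [this]
      exact hfi.indicator measurableSet_Iic
    · refine Integrable.mono' (g := fun _ => ∫ s, ‖f s‖ ∂μ0) (integrable_const _)
        ((hΦmeas.norm.stronglyMeasurable.integral_prod_right').aestronglyMeasurable) ?_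
      refine Filter.Eventually.of_forall (fun t => ?_)
      rw [Real.norm_of_nonneg (integral_nonneg (fun s => norm_nonneg _))]
      refine integral_mono ?_ hfi.norm (fun s => ?_)
      · simp only [Function.uncurry_apply_pair]
        have : (fun s => ‖Φ t s‖) = fun s => ‖(Iic t).indicator f s‖ := by
          funext s; simp [hΦ, Set.indicator_apply]
        rw [this]
        exact (hfi.indicator measurableSet_Iic).norm
      · simp only [Function.uncurry_apply_pair, hΦ]
        split
        · exact le_rfl
        · simp [norm_nonneg]
  have lhs_eq : ∫ t in (0:ℝ)..c, (∫ s in (0:ℝ)..t, f s) = ∫ t, (∫ s, Φ t s ∂μ0) ∂μ0 := by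
    rw [intervalIntegral.integral_of_le hc.le]
    refine setIntegral_congr_fun measurableSet_Ioc (fun t ht => ?_)
    have h1 : (fun s => Φ t s) = fun s => (Iic t).indicator f s := by
      funext s; simp [hΦ, Set.indicator_apply]
    rw [h1, MeasureTheory.integral_indicator measurableSet_Iic, hμ0,
      Measure.restrict_restrict measurableSet_Iic]
    have h2 : Iic t ∩ Ioc 0 c = Ioc 0 t := by
      ext s; constructor
      · rintro ⟨h1', h2', _⟩; exact ⟨h2', h1'⟩
      · rintro ⟨h1', h2'⟩; exact ⟨h2', h1', h2'.trans ht.2⟩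
    rw [h2, intervalIntegral.integral_of_le ht.1.le]
  have rhs_eq : ∫ s in (0:ℝ)..c, f s * (c - s) = ∫ s, (∫ t, Φ t s ∂μ0) ∂μ0 := by
    rw [intervalIntegral.integral_of_le hc.le]
    refine setIntegral_congr_fun measurableSet_Ioc (fun s hs => ?_)
    have h1 : (fun t => Φ t s) = fun t => (Ici s).indicator (fun _ => f s) t := by
      funext t; simp [hΦ, Set.indicator_apply]
    rw [h1, MeasureTheory.integral_indicator measurableSet_Ici, hμ0,
      Measure.restrict_restrict measurableSet_Ici]
    have h2 : Ici s ∩ Ioc 0 c = Icc s c := by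
      ext t; constructor
      · rintro ⟨h1', _, h3'⟩; exact ⟨h1', h3'⟩
      · rintro ⟨h1', h2'⟩; exact ⟨h1', hs.1.trans_le h1', h2'⟩
    rw [h2, setIntegral_const, Real.volume_real_Icc_of_le (by linarith [hs.2]), smul_eq_mul]
    ring
  rw [lhs_eq, rhs_eq, integral_integral_swap hΦint]

lemma cos_double {β : ℝ} (hβ : -1 < β) {a b : ℝ} (hab : a < b) :
    (∫ u in a..b, ∫ v in a..b, Real.cos (u - v) * |u - v| ^ β)
      = 2 * ∫ s in (0:ℝ)..(b - a), Real.cos s * |s| ^ β * ((b - a) - s) := by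
  set f : ℝ → ℝ := fun t => Real.cos t * |t| ^ β with hf
  have hfm : Measurable f := by fun_prop
  have hfii : ∀ c d : ℝ, IntervalIntegrable f volume c d := fun c d =>
    (absRpow_ii hβ c d).continuousOn_mul Real.continuous_cos.continuousOn
  have feven : ∀ t, f (-t) = f t := fun t => by simp [hf, Real.cos_neg, abs_neg]
  set G : ℝ → ℝ := fun y => ∫ t in (0:ℝ)..y, f t with hG
  have hGcont : Continuous G := intervalIntegral.continuous_primitive hfii 0
  have Godd : ∀ y, G (-y) = - G y := by
    intro y
    have h1 := intervalIntegral.integral_comp_neg (a := (0:ℝ)) (b := y) f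
    simp only [neg_zero] at h1
    simp only [feven] at h1
    rw [hG]
    simp only
    rw [intervalIntegral.integral_symm, ← h1]
  have stepA : ∀ u, (∫ v in a..b, Real.cos (u - v) * |u - v| ^ β) = G (u - a) - G (u - b) := by
    intro u
    have h1 : (∫ v in a..b, Real.cos (u - v) * |u - v| ^ β) = ∫ v in a..b, f (u - v) := rfl
    rw [h1, intervalIntegral.integral_comp_sub_left f u]
    have := intervalIntegral.integral_interval_sub_left (a := (0:ℝ)) (b := u - a) (c := u - b)
      (hfii 0 (u - a)) (hfii 0 (u - b))
    rw [← this]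
  have stepB : (∫ u in a..b, ∫ v in a..b, Real.cos (u - v) * |u - v| ^ β)
      = (∫ u in a..b, G (u - a)) - ∫ u in a..b, G (u - b) := by
    have gint : ∀ d : ℝ, IntervalIntegrable (fun u => G (u - d)) volume a b := fun d =>
      (hGcont.comp (continuous_sub_right d)).intervalIntegrable a b
    rw [← intervalIntegral.integral_sub (gint a) (gint b)]
    exact intervalIntegral.integral_congr (fun u _ => stepA u)
  rw [stepB]
  have e1 : (∫ u in a..b, G (u - a)) = ∫ y in (0:ℝ)..(b - a), G y := by
    have := intervalIntegral.integral_comp_sub_right (a := a) (b := b) G a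
    simpa using this
  have e2 : (∫ u in a..b, G (u - b)) = - ∫ y in (0:ℝ)..(b - a), G y := by
    have h1 := intervalIntegral.integral_comp_sub_right (a := a) (b := b) G b
    simp only [sub_self] at h1
    have h2 := intervalIntegral.integral_comp_neg (a := (0:ℝ)) (b := b - a) G
    simp only [Godd, intervalIntegral.integral_neg, neg_zero, neg_sub] at h2
    rw [h1, ← h2]
  rw [e1, e2, sub_neg_eq_add, ← two_mul, hG]
  rw [primitive_integral hfm hfii (by linarith : (0:ℝ) < b - a)]

lemma expIic_integrableOn {k : ℝ} (hk : 0 < k) (m : ℝ) :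
    IntegrableOn (fun r => Real.exp (k * r)) (Iic m) := by
  refine integrableOn_Iic_of_intervalIntegral_norm_bounded (Real.exp (k * m) / k) m
    (fun i => ((Real.continuous_exp.comp (continuous_const.mul continuous_id)).intervalIntegrable i m).1) tendsto_id ?_
  refine Eventually.of_forall (fun i => ?_)
  have h1 : (∫ x in i..m, ‖Real.exp (k * x)‖) = ∫ x in i..m, Real.exp (k * x) := by
    refine intervalIntegral.integral_congr (fun x _ => ?_)
    exact Real.norm_of_nonneg (Real.exp_pos _).le
  have h2 : (∫ x in i..m, Real.exp (k * x)) = k⁻¹ • ∫ x in k*i..k*m, Real.exp x := by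
    exact intervalIntegral.integral_comp_mul_left Real.exp hk.ne'
  rw [h1, h2, integral_exp, smul_eq_mul]
  rw [div_eq_inv_mul]
  have : Real.exp (k*i) > 0 := Real.exp_pos _
  nlinarith [inv_pos.mpr hk]

lemma expIic_integral {k : ℝ} (hk : 0 < k) (m : ℝ) :
    (∫ r in Iic m, Real.exp (k * r)) = Real.exp (k * m) / k := by
  have h1 : (∫ r in Iic m, Real.exp (k * r)) = ∫ x in Ioi (-m), Real.exp (-(x * k)) := by
    rw [← integral_comp_neg_Iic m (fun y => Real.exp (-(y * k)))]
    congr 1; funext x; ring_nf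
  rw [h1, integral_comp_mul_right_Ioi (fun y => Real.exp (-y)) (-m) hk, smul_eq_mul,
    integral_exp_neg_Ioi]
  rw [neg_mul, neg_neg, div_eq_inv_mul, mul_comm m k]

noncomputable def gker (x w r : ℝ) : ℝ := if r ≤ w then Real.exp (x * (r - w)) else 0

lemma gker_nonneg (x w r : ℝ) : 0 ≤ gker x w r := by
  unfold gker; split
  · exact (Real.exp_pos _).le
  · exact le_rfl

lemma gker_meas (x : ℝ) : Measurable (Function.uncurry (gker x)) := by
  unfold gker Function.uncurry
  exact Measurable.ite (measurableSet_le measurable_snd measurable_fst) (by fun_prop) measurable_const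

lemma gprod_indicator (x u v : ℝ) : (fun r => gker x u r * gker x v r) =
    Set.indicator (Iic (min u v)) (fun r => Real.exp (-(x*(u+v))) * Real.exp ((2*x)*r)) := by
  funext r
  rw [Set.indicator_apply]
  by_cases h : r ∈ Iic (min u v)
  · rw [if_pos h]
    have h1 : r ≤ u := le_trans h (min_le_left u v)
    have h2 : r ≤ v := le_trans h (min_le_right u v)
    unfold gker
    rw [if_pos h1, if_pos h2, ← Real.exp_add, ← Real.exp_add]
    ring_nf
  · rw [if_neg h]
    have : ¬ (r ≤ u ∧ r ≤ v) := fun hc => h (le_min hc.1 hc.2)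
    unfold gker
    rcases not_and_or.mp this with h' | h'
    · rw [if_neg h', zero_mul]
    · rw [if_neg h', mul_zero]

lemma gprod_integrable {x : ℝ} (hx : 0 < x) (u v : ℝ) :
    Integrable (fun r => gker x u r * gker x v r) volume := by
  rw [gprod_indicator, integrable_indicator_iff measurableSet_Iic]
  exact (expIic_integrableOn (by linarith) (min u v)).const_mul _

lemma gprod_integral {x : ℝ} (hx : 0 < x) (u v : ℝ) :
    (∫ r, gker x u r * gker x v r) = Real.exp (-(x * |u - v|)) / (2*x) := by
  rw [gprod_indicator, MeasureTheory.integral_indicator measurableSet_Iic,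
    MeasureTheory.integral_const_mul, expIic_integral (by linarith) (min u v),
    mul_div_assoc', ← Real.exp_add]
  congr 2
  rcases le_total u v with h | h
  · rw [min_eq_left h, abs_of_nonpos (by linarith : u - v ≤ 0)]; ring
  · rw [min_eq_right h, abs_of_nonneg (by linarith : 0 ≤ u - v)]; ring

lemma Qpos {x : ℝ} (hx : 0 < x) (a b : ℝ) :
    0 ≤ ∫ z : ℝ × ℝ, Real.sin z.1 * Real.sin z.2 * Real.exp (-(x * |z.1 - z.2|))
      ∂((volume.restrict (Ioc a b)).prod (volume.restrict (Ioc a b))) := by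
  set μ := volume.restrict (Ioc a b) with hμ
  haveI : IsFiniteMeasure μ := by
    constructor; rw [hμ, Measure.restrict_apply_univ]; exact measure_Ioc_lt_top
  set f : ℝ × ℝ → ℝ → ℝ := fun z r =>
    (2*x) * ((Real.sin z.1 * gker x z.1 r) * (Real.sin z.2 * gker x z.2 r)) with hf
  have hg1 : Measurable fun p : (ℝ × ℝ) × ℝ => gker x p.1.1 p.2 :=
    (gker_meas x).comp (measurable_fst.fst.prodMk measurable_snd)
  have hg2 : Measurable fun p : (ℝ × ℝ) × ℝ => gker x p.1.2 p.2 :=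
    (gker_meas x).comp (measurable_fst.snd.prodMk measurable_snd)
  have hmeas : Measurable (Function.uncurry f) := by
    apply Measurable.const_mul
    exact ((Real.measurable_sin.comp measurable_fst.fst).mul hg1).mul
      ((Real.measurable_sin.comp measurable_fst.snd).mul hg2)
  have hrearr : ∀ z : ℝ × ℝ, (fun r => f z r) =
      fun r => ((2*x) * (Real.sin z.1 * Real.sin z.2)) * (gker x z.1 r * gker x z.2 r) := by
    intro z; funext r; simp only [hf]; ring
  have pointwise : ∀ z : ℝ × ℝ,
      Real.sin z.1 * Real.sin z.2 * Real.exp (-(x * |z.1 - z.2|)) = ∫ r, f z r := by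
    intro z
    rw [hrearr z, MeasureTheory.integral_const_mul, gprod_integral hx]
    field_simp
  have hint : Integrable (Function.uncurry f) ((μ.prod μ).prod volume) := by
    refine (integrable_prod_iff hmeas.aestronglyMeasurable).mpr ⟨?_, ?_⟩
    · refine Eventually.of_forall (fun z => ?_)
      simp only [Function.uncurry_apply_pair]
      rw [show (fun r => f (z.1, z.2) r) = fun r => f z r by simp]
      rw [hrearr z]
      exact (gprod_integrable hx _ _).const_mul _
    · refine Integrable.mono' (g := fun _ => (1:ℝ)) (integrable_const 1)
        ((hmeas.norm.stronglyMeasurable.integral_prod_right').aestronglyMeasurable) ?_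
      refine Eventually.of_forall (fun z => ?_)
      rw [Real.norm_of_nonneg (integral_nonneg (fun r => norm_nonneg _))]
      have hb : ∀ r, ‖Function.uncurry f (z, r)‖ ≤ (2*x) * (gker x z.1 r * gker x z.2 r) := by
        intro r
        simp only [Function.uncurry_apply_pair, hf, Real.norm_eq_abs, abs_mul,
          abs_of_nonneg (gker_nonneg x z.1 r), abs_of_nonneg (gker_nonneg x z.2 r),
          abs_of_pos hx, abs_two]
        have h1 : |Real.sin z.1| * gker x z.1 r ≤ gker x z.1 r :=
          mul_le_of_le_one_left (gker_nonneg _ _ _) (Real.abs_sin_le_one _)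
        have h2 : |Real.sin z.2| * gker x z.2 r ≤ gker x z.2 r :=
          mul_le_of_le_one_left (gker_nonneg _ _ _) (Real.abs_sin_le_one _)
        exact mul_le_mul_of_nonneg_left
          (mul_le_mul h1 h2 (mul_nonneg (abs_nonneg _) (gker_nonneg _ _ _)) (gker_nonneg _ _ _))
          (by linarith)
      have hmaj : Integrable (fun r => (2*x) * (gker x z.1 r * gker x z.2 r)) volume :=
        (gprod_integrable hx _ _).const_mul _
      calc (∫ r, ‖Function.uncurry f (z, r)‖)
          ≤ ∫ r, (2*x) * (gker x z.1 r * gker x z.2 r) := by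
            refine integral_mono ?_ hmaj hb
            · have : Integrable (fun r => f z r) volume := by
                rw [hrearr z]; exact (gprod_integrable hx _ _).const_mul _
              simpa using this.norm
        _ = Real.exp (-(x * |z.1 - z.2|)) := by
            rw [MeasureTheory.integral_const_mul, gprod_integral hx]
            field_simp
        _ ≤ 1 := Real.exp_le_one_iff.mpr (neg_nonpos.mpr (by positivity))
  have swap := MeasureTheory.integral_integral_swap (f := f) hint
  calc ∫ z : ℝ × ℝ, Real.sin z.1 * Real.sin z.2 * Real.exp (-(x * |z.1 - z.2|)) ∂(μ.prod μ)
      = ∫ z : ℝ × ℝ, (∫ r, f z r) ∂(μ.prod μ) := by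
        exact integral_congr_ae (Eventually.of_forall (fun z => pointwise z))
    _ = ∫ r, ∫ z : ℝ × ℝ, f z r ∂(μ.prod μ) := swap
    _ ≥ 0 := by
        refine integral_nonneg (fun r => ?_)
        have : (fun z : ℝ × ℝ => f z r) =
            fun z => (2*x) * ((Real.sin z.1 * gker x z.1 r) * (Real.sin z.2 * gker x z.2 r)) := rfl
        rw [this, MeasureTheory.integral_const_mul, integral_prod_mul
          (f := fun w => Real.sin w * gker x w r) (g := fun w => Real.sin w * gker x w r)]
        have := mul_self_nonneg (∫ w, Real.sin w * gker x w r ∂μ)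
        positivity

lemma gammaRep {β : ℝ} (hβ0 : β < 0) {w : ℝ} (hw : 0 < w) :
    ∫ x in Ioi (0:ℝ), x ^ (-β - 1) * Real.exp (-(x * w)) = Real.Gamma (-β) * w ^ β := by
  have h := Real.integral_rpow_mul_exp_neg_mul_Ioi (a := -β) (r := w) (by linarith) hw
  have h2 : (fun x : ℝ => x ^ (-β - 1) * Real.exp (-(x * w)))
      = fun x : ℝ => x ^ (-β - 1) * Real.exp (-(w * x)) := by
    funext x; rw [mul_comm x w]
  rw [h2, h, one_div, Real.inv_rpow hw.le, Real.rpow_neg hw.le, inv_inv, mul_comm]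

lemma gammaRepInt {β : ℝ} (hβ0 : β < 0) {w : ℝ} (hw : 0 < w) :
    IntegrableOn (fun x : ℝ => x ^ (-β - 1) * Real.exp (-(x * w))) (Ioi 0) := by
  have h := integrableOn_rpow_mul_exp_neg_mul_rpow (s := -β - 1) (p := 1) (b := w)
    (by linarith) zero_lt_one hw
  simp only [Real.rpow_one] at h
  have h2 : (fun x : ℝ => x ^ (-β - 1) * Real.exp (-(x * w)))
      = fun x : ℝ => x ^ (-β - 1) * Real.exp (-w * x) := by
    funext x; rw [neg_mul, mul_comm x w]
  rw [h2]; exact h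

lemma sin_pos {β : ℝ} (hβ1 : -1 < β) (hβ0 : β < 0) {a b : ℝ} (hab : a < b) :
    0 ≤ ∫ z : ℝ × ℝ, Real.sin z.1 * Real.sin z.2 * |z.1 - z.2| ^ β
      ∂((volume.restrict (Ioc a b)).prod (volume.restrict (Ioc a b))) := by
  set μ := volume.restrict (Ioc a b) with hμ
  set μp := μ.prod μ with hμp
  have hΓ : 0 < Real.Gamma (-β) := Real.Gamma_pos_of_pos (by linarith)
  have hdiag : ∀ᵐ z : ℝ × ℝ ∂μp, z.1 ≠ z.2 := by
    have hD : MeasurableSet {z : ℝ × ℝ | z.1 = z.2} :=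
      measurableSet_eq_fun measurable_fst measurable_snd
    have hD0 : μp {z : ℝ × ℝ | z.1 = z.2} = 0 := by
      rw [hμp, Measure.prod_apply hD]
      have : ∀ u : ℝ, μ (Prod.mk u ⁻¹' {z : ℝ × ℝ | z.1 = z.2}) = 0 := by
        intro u
        have : Prod.mk u ⁻¹' {z : ℝ × ℝ | z.1 = z.2} = {u} := by
          ext v; simp [eq_comm]
        rw [this]
        refine le_antisymm ?_ (zero_le)
        calc μ {u} = volume ({u} ∩ Ioc a b) := Measure.restrict_apply (measurableSet_singleton u)
          _ ≤ volume {u} := measure_mono inter_subset_left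
          _ = 0 := Real.volume_singleton
      simp [this]
    rw [ae_iff]
    convert hD0 using 2
    ext z; simp
  set Ψ : ℝ × ℝ → ℝ → ℝ := fun z x =>
    Real.sin z.1 * Real.sin z.2 * (x ^ (-β - 1) * Real.exp (-(x * |z.1 - z.2|))) with hΨ
  have hΨmeas : Measurable (Function.uncurry Ψ) := by
    unfold Ψ; unfold Function.uncurry; fun_prop
  have key : ∀ᵐ z ∂μp, Real.sin z.1 * Real.sin z.2 * |z.1 - z.2| ^ β
      = (Real.Gamma (-β))⁻¹ * ∫ x in Ioi (0:ℝ), Ψ z x := by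
    filter_upwards [hdiag] with z hz
    have hw : 0 < |z.1 - z.2| := abs_pos.mpr (sub_ne_zero.mpr hz)
    rw [hΨ]
    simp only
    rw [MeasureTheory.integral_const_mul, gammaRep hβ0 hw]
    field_simp
  have hΨint : Integrable (Function.uncurry Ψ) (μp.prod (volume.restrict (Ioi 0))) := by
    refine (integrable_prod_iff hΨmeas.aestronglyMeasurable).mpr ⟨?_, ?_⟩
    · filter_upwards [hdiag] with z hz
      have hw : 0 < |z.1 - z.2| := abs_pos.mpr (sub_ne_zero.mpr hz)
      simp only [Function.uncurry_apply_pair]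
      exact ((gammaRepInt hβ0 hw).const_mul _)
    · refine Integrable.mono' (g := fun z : ℝ × ℝ => Real.Gamma (-β) * |z.1 - z.2| ^ β)
        ((Kint hβ1 hab).const_mul _)
        ((hΨmeas.norm.stronglyMeasurable.integral_prod_right').aestronglyMeasurable) ?_
      filter_upwards [hdiag] with z hz
      have hw : 0 < |z.1 - z.2| := abs_pos.mpr (sub_ne_zero.mpr hz)
      rw [Real.norm_of_nonneg (integral_nonneg (fun x => norm_nonneg _))]
      have hcong : ∫ x in Ioi (0:ℝ), ‖Function.uncurry Ψ (z, x)‖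
          = |Real.sin z.1 * Real.sin z.2| * ∫ x in Ioi (0:ℝ), x ^ (-β - 1) * Real.exp (-(x * |z.1 - z.2|)) := by
        rw [← MeasureTheory.integral_const_mul]
        refine setIntegral_congr_fun measurableSet_Ioi (fun x hx => ?_)
        simp only [Function.uncurry_apply_pair, hΨ, Real.norm_eq_abs, abs_mul]
        rw [abs_of_nonneg (Real.rpow_nonneg (le_of_lt hx) _),
          abs_of_pos (Real.exp_pos _)]
      rw [hcong, gammaRep hβ0 hw]
      refine mul_le_of_le_one_left (by positivity) ?_
      rw [abs_mul]
      exact mul_le_one₀ (Real.abs_sin_le_one _) (abs_nonneg _) (Real.abs_sin_le_one _)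
  calc (0:ℝ) ≤ (Real.Gamma (-β))⁻¹ *
        ∫ x in Ioi (0:ℝ), (∫ z : ℝ × ℝ, Ψ z x ∂μp) := by
        refine mul_nonneg (by positivity) ?_
        refine setIntegral_nonneg measurableSet_Ioi (fun x hx => ?_)
        have hzfun : (fun z : ℝ × ℝ => Ψ z x) = fun z =>
            x ^ (-β - 1) * (Real.sin z.1 * Real.sin z.2 * Real.exp (-(x * |z.1 - z.2|))) := by
          funext z; simp only [hΨ]; ring
        rw [hzfun, MeasureTheory.integral_const_mul]
        exact mul_nonneg (Real.rpow_nonneg hx.le _) (Qpos hx a b)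
    _ = (Real.Gamma (-β))⁻¹ * ∫ z : ℝ × ℝ, (∫ x in Ioi (0:ℝ), Ψ z x) ∂μp := by
        rw [MeasureTheory.integral_integral_swap hΨint]
    _ = ∫ z : ℝ × ℝ, Real.sin z.1 * Real.sin z.2 * |z.1 - z.2| ^ β ∂μp := by
        rw [← MeasureTheory.integral_const_mul]
        refine (MeasureTheory.integral_congr_ae ?_).symm
        filter_upwards [key] with z hz
        rw [hz]

/-- For `H ∈ (1/2,1)`, `α_H = H(2H-1)`, and `a < b`,
`α_H ∫_a^b ∫_a^b cos u cos v |u-v|^{2H-2} du dv ≤ 2 α_H ∫_0^{b-a} cos v · v^{2H-2} (b-a-v) dv`. -/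
theorem cos_norm_fbm_upper (H : ℝ) (hH : H ∈ Set.Ioo (1/2 : ℝ) 1)
    (a b : ℝ) (hab : a < b) :
    H * (2*H - 1) *
      ∫ u in a..b, ∫ v in a..b, Real.cos u * Real.cos v * |u - v| ^ (2*H - 2) ≤
    2 * (H * (2*H - 1)) *
      ∫ v in (0:ℝ)..(b - a), Real.cos v * v ^ (2*H - 2) * (b - a - v) := by
  obtain ⟨hH1, hH2⟩ := hH
  set β : ℝ := 2*H - 2 with hβ
  have hβ1 : -1 < β := by rw [hβ]; linarith
  have hβ0 : β < 0 := by rw [hβ]; linarith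
  have hα : 0 ≤ H * (2*H - 1) := by nlinarith
  have hc : 0 < b - a := by linarith
  set μ := volume.restrict (Ioc a b) with hμ
  -- conversion between interval and set double integrals
  have conv : ∀ F : ℝ → ℝ → ℝ, (∫ u in a..b, ∫ v in a..b, F u v)
      = ∫ u, (∫ v, F u v ∂μ) ∂μ := by
    intro F
    rw [intervalIntegral.integral_of_le hab.le]
    refine setIntegral_congr_fun measurableSet_Ioc (fun u _ => ?_)
    rw [intervalIntegral.integral_of_le hab.le]
  -- inner integrability
  have hIv : ∀ (g h : ℝ → ℝ), Continuous h → ∀ u : ℝ,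
      Integrable (fun v => g u * h v * |u - v| ^ β) μ := by
    intro g h hh u
    rw [hμ]
    rw [show Integrable (fun v => g u * h v * |u - v| ^ β) (volume.restrict (Ioc a b))
      = IntegrableOn (fun v => g u * h v * |u - v| ^ β) (Ioc a b) volume from rfl,
      ← intervalIntegrable_iff_integrableOn_Ioc_of_le hab.le]
    exact (shift_ii hβ1 u a b).continuousOn_mul ((continuous_const.mul hh).continuousOn)
  -- product integrability
  have hcc : Integrable (fun p : ℝ × ℝ => Real.cos p.1 * Real.cos p.2 * |p.1 - p.2| ^ β)
      (μ.prod μ) := mulKint hβ1 hab Real.measurable_cos Real.measurable_cos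
        (fun x => Real.abs_cos_le_one x) (fun x => Real.abs_cos_le_one x)
  have hss : Integrable (fun p : ℝ × ℝ => Real.sin p.1 * Real.sin p.2 * |p.1 - p.2| ^ β)
      (μ.prod μ) := mulKint hβ1 hab Real.measurable_sin Real.measurable_sin
        (fun x => Real.abs_sin_le_one x) (fun x => Real.abs_sin_le_one x)
  -- additive decomposition
  have inner_add : ∀ u : ℝ, (∫ v, Real.cos (u - v) * |u - v| ^ β ∂μ)
      = (∫ v, Real.cos u * Real.cos v * |u - v| ^ β ∂μ)
        + ∫ v, Real.sin u * Real.sin v * |u - v| ^ β ∂μ := by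
    intro u
    have hpt : (fun v => Real.cos (u - v) * |u - v| ^ β)
        = fun v => Real.cos u * Real.cos v * |u - v| ^ β
          + Real.sin u * Real.sin v * |u - v| ^ β := by
      funext v; rw [Real.cos_sub]; ring
    rw [hpt, integral_add (hIv Real.cos Real.cos Real.continuous_cos u)
      (hIv Real.sin Real.sin Real.continuous_sin u)]
  have outer_add : (∫ u, (∫ v, Real.cos (u - v) * |u - v| ^ β ∂μ) ∂μ)
      = (∫ u, (∫ v, Real.cos u * Real.cos v * |u - v| ^ β ∂μ) ∂μ)
        + ∫ u, (∫ v, Real.sin u * Real.sin v * |u - v| ^ β ∂μ) ∂μ := by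
    rw [MeasureTheory.integral_congr_ae (Eventually.of_forall inner_add)]
    exact integral_add hcc.integral_prod_left hss.integral_prod_left
  have hC : 0 ≤ ∫ u, (∫ v, Real.sin u * Real.sin v * |u - v| ^ β ∂μ) ∂μ := by
    rw [MeasureTheory.integral_integral hss]
    exact sin_pos hβ1 hβ0 hab
  have hBA : (∫ u in a..b, ∫ v in a..b, Real.cos u * Real.cos v * |u - v| ^ β)
      ≤ ∫ u in a..b, ∫ v in a..b, Real.cos (u - v) * |u - v| ^ β := by
    rw [conv (fun u v => Real.cos u * Real.cos v * |u - v| ^ β),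
      conv (fun u v => Real.cos (u - v) * |u - v| ^ β), outer_add]
    linarith [hC]
  have hA := cos_double hβ1 hab
  have hRHS : (∫ v in (0:ℝ)..(b - a), Real.cos v * v ^ β * (b - a - v))
      = ∫ s in (0:ℝ)..(b - a), Real.cos s * |s| ^ β * ((b - a) - s) := by
    rw [intervalIntegral.integral_of_le hc.le, intervalIntegral.integral_of_le hc.le]
    refine setIntegral_congr_fun measurableSet_Ioc (fun s hs => ?_)
    rw [abs_of_pos hs.1]
  calc H * (2*H - 1) * ∫ u in a..b, ∫ v in a..b, Real.cos u * Real.cos v * |u - v| ^ β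
      ≤ H * (2*H - 1) * ∫ u in a..b, ∫ v in a..b, Real.cos (u - v) * |u - v| ^ β :=
        mul_le_mul_of_nonneg_left hBA hα
    _ = 2 * (H * (2*H - 1)) * ∫ v in (0:ℝ)..(b - a), Real.cos v * v ^ β * (b - a - v) := by
        rw [hA, hRHS]; ring
end

section
/- Let d ≥ 1, H ∈ (1/2, 1), and β < 2H+1. Then there exists a constant c > 0 such that for all h ∈ (0, 1], ∫_{|ξ| ≥ 1} |ξ|^{−(d−β+2H+1)} sin⁴(h|ξ|) dξ ≥ c h^{2H+1−β}. -/
open MeasureTheory Metric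

lemma sin4_aux {x : ℝ} (h1 : 2 ≤ x) (h2 : x ≤ 9/4) : (1/2 : ℝ) ≤ Real.sin x := by
  have pi_gt := Real.pi_gt_d6
  have pi_lt := Real.pi_lt_d2
  rw [← Real.sin_pi_sub]
  have h3 : Real.sin (Real.pi - 9/4) ≤ Real.sin (Real.pi - x) := by
    apply Real.sin_le_sin_of_le_of_le_pi_div_two <;> linarith
  have h4 : (Real.pi - 9/4) - (Real.pi - 9/4) ^ 3 / 4 < Real.sin (Real.pi - 9/4) :=
    by have := Real.sin_gt_sub_cube (x := Real.pi - 9/4) (by linarith); linarith [pow_pos (by linarith : (0:ℝ) < Real.pi - 9/4) 3]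
  nlinarith [pow_le_pow_left₀ (by linarith : (0:ℝ) ≤ Real.pi - 9/4)
    (by linarith : Real.pi - 9/4 ≤ 0.9) 3]

/-- Key lower bound: for `d ≥ 1`, `H ∈ (1/2,1)` and `β < 2H+1` there is `c > 0`
such that for all `h ∈ (0,1]`,
`∫_{|ξ| ≥ 1} |ξ|^{-(d-β+2H+1)} sin⁴(h|ξ|) dξ ≥ c h^{2H+1-β}`. -/
theorem wave_sin4_lower_bound (d : ℕ) (hd : 1 ≤ d) (H β : ℝ)
    (hH : H ∈ Set.Ioo (1/2 : ℝ) 1) (hβ : β < 2*H + 1) :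
    ∃ c : ℝ, 0 < c ∧ ∀ h : ℝ, h ∈ Set.Ioc (0:ℝ) 1 →
      c * h ^ (2*H + 1 - β) ≤
      ∫ ξ in {ξ : EuclideanSpace ℝ (Fin d) | 1 ≤ ‖ξ‖},
        ‖ξ‖ ^ (-((d : ℝ) - β + 2*H + 1)) * Real.sin (h * ‖ξ‖) ^ 4 := by
  haveI : Nonempty (Fin d) := ⟨⟨0, hd⟩⟩
  set E := EuclideanSpace ℝ (Fin d)
  obtain ⟨hH1, hH2⟩ := hH
  set p : ℝ := (d : ℝ) - β + 2*H + 1 with hpdef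
  have hdp : (d : ℝ) < p := by simp only [hpdef]; linarith
  have hp0 : (0 : ℝ) < p := lt_of_le_of_lt (Nat.cast_nonneg d) hdp
  have hdim : Module.finrank ℝ E = d := finrank_euclideanSpace_fin
  set B : ℝ := (volume (ball (0:E) 1)).toReal with hBdef
  have hB : 0 < B := by
    rw [hBdef]
    exact ENNReal.toReal_pos (measure_ball_pos volume (0:E) one_pos).ne'
      measure_ball_lt_top.ne
  have hpow : (2:ℝ)^d < (9/4:ℝ)^d := by
    apply pow_lt_pow_left₀ (by norm_num) (by norm_num)
    omega
  refine ⟨(1/16) * (9/4 : ℝ) ^ (-p) * ((9/4:ℝ)^d - 2^d) * B,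
    mul_pos (mul_pos (mul_pos (by norm_num)
      (Real.rpow_pos_of_pos (by norm_num) _)) (by linarith)) hB, ?_⟩
  rintro h ⟨h0, h1⟩
  set g : E → ℝ := fun ξ => ‖ξ‖ ^ (-p) * Real.sin (h * ‖ξ‖) ^ 4 with hgdef
  have hgmeas : Measurable g := by fun_prop
  have hg0 : ∀ ξ, 0 ≤ g ξ := fun ξ => by
    apply mul_nonneg (Real.rpow_nonneg (norm_nonneg _) _) (by positivity)
  -- Integrability on S
  set S : Set E := {ξ : E | 1 ≤ ‖ξ‖} with hSdef
  have hSmeas : MeasurableSet S := measurableSet_le measurable_const measurable_norm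
  have hIS : IntegrableOn g S volume := by
    have hint : Integrable (fun ξ : E => (2:ℝ)^p * (1 + ‖ξ‖) ^ (-p)) volume :=
      (integrable_one_add_norm (by rw [hdim]; exact hdp)).const_mul _
    refine (hint.restrict (s := S)).mono' hgmeas.aestronglyMeasurable ?_
    rw [ae_restrict_iff' hSmeas]
    filter_upwards with ξ hξ
    have hξ1 : (1:ℝ) ≤ ‖ξ‖ := hξ
    have hsin : Real.sin (h * ‖ξ‖) ^ 4 ≤ 1 := by
      nlinarith [Real.sin_sq_le_one (h * ‖ξ‖), sq_nonneg (Real.sin (h * ‖ξ‖))]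
    have key : (1 + ‖ξ‖) ^ p ≤ 2^p * ‖ξ‖ ^ p := by
      rw [← Real.mul_rpow (by norm_num) (norm_nonneg _)]
      exact Real.rpow_le_rpow (by linarith) (by linarith) hp0.le
    have h2 : ‖ξ‖ ^ (-p) ≤ 2^p * (1 + ‖ξ‖) ^ (-p) := by
      rw [Real.rpow_neg (norm_nonneg _), Real.rpow_neg (by linarith)]
      rw [← div_le_iff₀' (by positivity : (0:ℝ) < (2:ℝ)^p)] at key
      calc (‖ξ‖ ^ p)⁻¹ ≤ ((1 + ‖ξ‖) ^ p / 2^p)⁻¹ := by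
            apply inv_anti₀ (by positivity) key
        _ = 2^p * ((1 + ‖ξ‖) ^ p)⁻¹ := by rw [inv_div]; ring
    have : g ξ ≤ ‖ξ‖ ^ (-p) := by
      have := Real.rpow_nonneg (norm_nonneg ξ) (-p)
      calc g ξ ≤ ‖ξ‖ ^ (-p) * 1 := by
            apply mul_le_mul_of_nonneg_left hsin this
        _ = ‖ξ‖ ^ (-p) := mul_one _
    rw [Real.norm_eq_abs, abs_of_nonneg (hg0 ξ)]
    linarith
  -- Annulus
  set A : Set E := closedBall (0:E) (9/(4*h)) \ ball (0:E) (2/h) with hAdef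
  have hAle : ∀ ξ ∈ A, 2/h ≤ ‖ξ‖ ∧ ‖ξ‖ ≤ 9/(4*h) := by
    rintro ξ ⟨hc, hb⟩
    rw [mem_closedBall, dist_zero_right] at hc
    rw [mem_ball, dist_zero_right, not_lt] at hb
    exact ⟨hb, hc⟩
  have hAS : A ⊆ S := by
    intro ξ hξ
    have := (hAle ξ hξ).1
    have h2h : (2:ℝ) ≤ 2/h := by
      rw [le_div_iff₀ h0]; linarith
    exact le_trans (by linarith) this
  have hAmeas : MeasurableSet A := measurableSet_closedBall.diff measurableSet_ball
  have hAfin : volume A ≠ ⊤ :=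
    (lt_of_le_of_lt (measure_mono Set.diff_subset) measure_closedBall_lt_top).ne
  -- step 1 : integral over S ≥ integral over A
  have step1 : (∫ ξ in A, g ξ) ≤ ∫ ξ in S, g ξ := by
    apply setIntegral_mono_set hIS
    · filter_upwards with ξ using hg0 ξ
    · exact HasSubset.Subset.eventuallyLE hAS
  -- step 2 : pointwise bound on A
  have step2 : (9/(4*h)) ^ (-p) * (1/16) * (volume A).toReal ≤ ∫ ξ in A, g ξ := by
    apply setIntegral_ge_of_const_le_real hAmeas hAfin _ (hIS.mono_set hAS)
    intro ξ hξ
    obtain ⟨hlo, hhi⟩ := hAle ξ hξ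
    have hξpos : (0:ℝ) < ‖ξ‖ := lt_of_lt_of_le (by positivity) hlo
    have hrp : (9/(4*h)) ^ (-p) ≤ ‖ξ‖ ^ (-p) :=
      Real.rpow_le_rpow_of_nonpos hξpos hhi (by linarith)
    have hx1 : 2 ≤ h * ‖ξ‖ := by
      rw [div_le_iff₀ h0] at hlo
      rw [mul_comm]; linarith
    have hx2 : h * ‖ξ‖ ≤ 9/4 := by
      rw [le_div_iff₀ (by positivity : (0:ℝ) < 4*h)] at hhi
      nlinarith
    have hsin : (1/2 : ℝ) ≤ Real.sin (h * ‖ξ‖) := sin4_aux hx1 hx2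
    have hsin4 : (1/16 : ℝ) ≤ Real.sin (h * ‖ξ‖) ^ 4 := by
      have := pow_le_pow_left₀ (by norm_num : (0:ℝ) ≤ 1/2) hsin 4
      norm_num at this; linarith
    have := Real.rpow_nonneg (by positivity : (0:ℝ) ≤ 9/(4*h)) (-p)
    calc (9/(4*h)) ^ (-p) * (1/16) ≤ ‖ξ‖ ^ (-p) * Real.sin (h * ‖ξ‖) ^ 4 := by
          apply mul_le_mul hrp hsin4 (by norm_num)
            (Real.rpow_nonneg (norm_nonneg _) _)
      _ = g ξ := rfl
  -- volume of annulus
  have hball_le : ball (0:E) (2/h) ⊆ closedBall (0:E) (9/(4*h)) := by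
    apply ball_subset_closedBall.trans (closedBall_subset_closedBall _)
    rw [div_le_div_iff₀ h0 (by positivity)]; nlinarith
  have hle29 : (2:ℝ)/h ≤ 9/(4*h) := by
    rw [div_le_div_iff₀ h0 (by positivity)]; nlinarith
  have hv1 : volume (closedBall (0:E) (9/(4*h)))
      = ENNReal.ofReal ((9/(4*h))^d) * volume (ball (0:E) 1) := by
    rw [Measure.addHaar_closedBall volume (0:E) (by positivity), hdim]
  have hv2 : volume (ball (0:E) (2/h))
      = ENNReal.ofReal ((2/h)^d) * volume (ball (0:E) 1) := by
    rw [Measure.addHaar_ball volume (0:E) (by positivity), hdim]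
  have hpowd : (2/h:ℝ)^d ≤ (9/(4*h))^d :=
    pow_le_pow_left₀ (by positivity) hle29 d
  have hvol : (volume A).toReal = ((9/(4*h))^d - (2/h)^d) * B := by
    rw [hAdef, measure_diff hball_le measurableSet_ball.nullMeasurableSet
      measure_ball_lt_top.ne, hv1, hv2,
      ← ENNReal.sub_mul (fun _ _ => measure_ball_lt_top.ne),
      ← ENNReal.ofReal_sub _ (by positivity),
      ENNReal.toReal_mul, ENNReal.toReal_ofReal (by linarith)]
  -- algebra
  have halg : (1/16) * (9/4 : ℝ) ^ (-p) * ((9/4:ℝ)^d - 2^d) * B * h ^ (2*H + 1 - β)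
      = (9/(4*h)) ^ (-p) * (1/16) * (((9/(4*h))^d - (2/h)^d) * B) := by
    have e1 : (9/(4*h) : ℝ) = (9/4) / h := by field_simp
    have e2 : ((9/(4*h)) : ℝ) ^ (-p) = (9/4 : ℝ)^(-p) * h ^ p := by
      rw [e1, Real.div_rpow (by norm_num) h0.le, Real.rpow_neg h0.le,
        div_eq_mul_inv, inv_inv]
    have e3 : ((9/(4*h)) : ℝ)^d - (2/h)^d = ((9/4:ℝ)^d - 2^d) / h^d := by
      have hhd : h^d ≠ 0 := pow_ne_zero d h0.ne'
      rw [e1, div_pow (9/4:ℝ) h d, div_pow (2:ℝ) h d, sub_div]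
    have e4 : h ^ p / h^d = h ^ (2*H + 1 - β) := by
      rw [← Real.rpow_natCast h d, ← Real.rpow_sub h0]
      congr 1
      simp only [hpdef]; ring
    rw [e2, e3]
    rw [← e4]
    field_simp
  calc (1/16) * (9/4 : ℝ) ^ (-p) * ((9/4:ℝ)^d - 2^d) * B * h ^ (2*H + 1 - β)
      = (9/(4*h)) ^ (-p) * (1/16) * (volume A).toReal := by rw [halg, hvol]
    _ ≤ ∫ ξ in A, g ξ := step2
    _ ≤ ∫ ξ in S, g ξ := step1
end
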